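/- arXiv:1912.09454 — 2 statements merged into one kernel-verified Lean document; each statement's English description precedes it below -/
import Mathlib

section
/- Let f : [0,a] → ℝ be measurable, nonnegative, with bounded range, b ∈ (0,a), and suppose f* is strictly decreasing to the right at t = b. Then the unique (up to a.e. equality) maximizer of ∫₀^a β(t) f(t) dt over measurable β : [0,a] → [0,1] with ∫₀^a β ≤ b is β(t) = 𝟙_{{t : f(t) ≥ f*(b)}}(t). -/
open MeasureTheory Set

/-- The asymmetric decreasing rearrangement of `f : [0,a] → ℝ`:
`f*(x) = ∫₀^∞ 𝟙_{[0, μ({y ∈ [0,a] : f(y) > t})]}(x) dt`. -/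
noncomputable def rearr (a : ℝ) (f : ℝ → ℝ) (x : ℝ) : ℝ :=
  ∫ t in Set.Ioi (0:ℝ),
    Set.indicator (Set.Icc (0:ℝ) ((volume {y ∈ Set.Icc (0:ℝ) a | t < f y}).toReal))
      (fun _ => (1:ℝ)) x

/-- `g` is strictly decreasing to the right at `x₀`. -/
def StrictDecRightAt (g : ℝ → ℝ) (x₀ : ℝ) : Prop :=
  ∃ ε₀ > (0:ℝ), ∀ ε : ℝ, 0 < ε → ε < ε₀ → g (x₀ + ε) < g x₀

/-- `g` is strictly decreasing from the left at `x₀`. -/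
def StrictDecLeftAt (g : ℝ → ℝ) (x₀ : ℝ) : Prop :=
  ∃ ε₀ > (0:ℝ), ∀ ε : ℝ, 0 < ε → ε < ε₀ → g x₀ < g (x₀ - ε)

open scoped ENNReal

noncomputable def D (a : ℝ) (f : ℝ → ℝ) (t : ℝ) : ℝ≥0∞ :=
  volume ({y | t < f y} ∩ Icc 0 a)

lemma D_set_eq (a : ℝ) (f : ℝ → ℝ) (t : ℝ) :
    {y ∈ Icc (0:ℝ) a | t < f y} = {y | t < f y} ∩ Icc 0 a := by
  ext y; simp [and_comm]

lemma D_anti (a : ℝ) (f : ℝ → ℝ) : Antitone (D a f) := by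
  intro t s hts
  exact measure_mono (fun y hy => ⟨lt_of_le_of_lt hts hy.1, hy.2⟩)

lemma D_meas (a : ℝ) (f : ℝ → ℝ) : Measurable (D a f) :=
  (D_anti a f).measurable

lemma D_le (a : ℝ) (f : ℝ → ℝ) (t : ℝ) : D a f t ≤ ENNReal.ofReal a := by
  have : D a f t ≤ volume (Icc (0:ℝ) a) := measure_mono inter_subset_right
  simpa [Real.volume_Icc] using this

lemma D_ne_top (a : ℝ) (f : ℝ → ℝ) (t : ℝ) : D a f t ≠ ⊤ :=
  ((D_le a f t).trans_lt ENNReal.ofReal_lt_top).ne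

lemma D_eq_zero {a M : ℝ} {f : ℝ → ℝ} (hM : ∀ x ∈ Icc (0:ℝ) a, f x ≤ M) {t : ℝ}
    (ht : M ≤ t) : D a f t = 0 := by
  have : {y | t < f y} ∩ Icc 0 a = ∅ := by
    ext y
    simp only [mem_inter_iff, mem_setOf_eq, mem_empty_iff_false, iff_false, not_and]
    intro h hy
    exact absurd ((hM y hy).trans ht) (not_le.2 h)
  simp [D, this]

noncomputable def Fr (a : ℝ) (f : ℝ → ℝ) (x : ℝ) : ℝ≥0∞ :=
  volume {t | 0 < t ∧ ENNReal.ofReal x ≤ D a f t}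

lemma Fr_anti (a : ℝ) (f : ℝ → ℝ) : Antitone (Fr a f) := by
  intro x y hxy
  exact measure_mono (fun t ht => ⟨ht.1, le_trans (ENNReal.ofReal_le_ofReal hxy) ht.2⟩)

lemma Fr_subset {a M : ℝ} {f : ℝ → ℝ} (hM : ∀ x ∈ Icc (0:ℝ) a, f x ≤ M) {x : ℝ}
    (hx : 0 < x) : {t | 0 < t ∧ ENNReal.ofReal x ≤ D a f t} ⊆ Ioc 0 M := by
  intro t ⟨ht0, htx⟩
  refine ⟨ht0, ?_⟩
  by_contra h
  rw [D_eq_zero hM (le_of_lt (not_le.1 h))] at htx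
  exact absurd (le_zero_iff.mp htx) (ENNReal.ofReal_pos.2 hx).ne' 

lemma Fr_le {a M : ℝ} {f : ℝ → ℝ} (hM : ∀ x ∈ Icc (0:ℝ) a, f x ≤ M) {x : ℝ}
    (hx : 0 < x) : Fr a f x ≤ ENNReal.ofReal M := by
  calc Fr a f x ≤ volume (Ioc 0 M) := measure_mono (Fr_subset hM hx)
    _ ≤ ENNReal.ofReal M := by simp [Real.volume_Ioc]

lemma Fr_ne_top {a M : ℝ} {f : ℝ → ℝ} (hM : ∀ x ∈ Icc (0:ℝ) a, f x ≤ M) {x : ℝ}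
    (hx : 0 < x) : Fr a f x ≠ ⊤ :=
  ((Fr_le hM hx).trans_lt ENNReal.ofReal_lt_top).ne

lemma rearr_eq {a : ℝ} {f : ℝ → ℝ} {x : ℝ} (hx : 0 < x) :
    rearr a f x = (Fr a f x).toReal := by
  have hset : ∀ t : ℝ,
      Set.indicator (Icc (0:ℝ) ((volume {y ∈ Icc (0:ℝ) a | t < f y}).toReal))
        (fun _ => (1:ℝ)) x
      = Set.indicator {t | ENNReal.ofReal x ≤ D a f t} (fun _ => (1:ℝ)) t := by
    intro t
    have hD : volume {y ∈ Icc (0:ℝ) a | t < f y} = D a f t := by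
      rw [D_set_eq]; rfl
    rw [hD]
    simp only [Set.indicator_apply, mem_Icc, mem_setOf_eq]
    have hiff : (0 ≤ x ∧ x ≤ (D a f t).toReal) ↔ ENNReal.ofReal x ≤ D a f t := by
      rw [ENNReal.ofReal_le_iff_le_toReal (D_ne_top a f t)]
      simp [hx.le]
    exact if_congr hiff rfl rfl
  have hS : MeasurableSet {t | ENNReal.ofReal x ≤ D a f t} := by
    apply Set.OrdConnected.measurableSet
    exact ⟨fun t1 h1 t2 h2 z hz => le_trans h2 (D_anti a f hz.2)⟩
  have hFr : {t | ENNReal.ofReal x ≤ D a f t} ∩ Ioi 0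
      = {t | 0 < t ∧ ENNReal.ofReal x ≤ D a f t} := by
    ext t; simp [and_comm]
  unfold rearr
  simp_rw [hset]
  rw [integral_indicator hS, setIntegral_const, measureReal_def, Measure.restrict_apply hS, hFr]
  simp [Fr]

lemma measSet_lt {f : ℝ → ℝ} (hmf : Measurable f) (t : ℝ) :
    MeasurableSet {y | t < f y} := hmf measurableSet_Ioi

noncomputable def Gf (a : ℝ) (f : ℝ → ℝ) (g : ℝ → ℝ≥0∞) (t : ℝ) : ℝ≥0∞ :=
  ∫⁻ y in Icc (0:ℝ) a, (if t < f y then g y else 0)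

lemma Gf_anti (a : ℝ) (f : ℝ → ℝ) (g : ℝ → ℝ≥0∞) : Antitone (Gf a f g) := by
  intro t s hts
  refine lintegral_mono (fun y => ?_)
  by_cases h : s < f y
  · rw [if_pos h, if_pos (lt_of_le_of_lt hts h)]
  · rw [if_neg h]; exact zero_le

lemma tonelli {a : ℝ} {f : ℝ → ℝ} (hmf : Measurable f) (g : ℝ → ℝ≥0∞)
    (hg : Measurable g) :
    ∫⁻ y in Icc (0:ℝ) a, g y * ENNReal.ofReal (f y)
      = ∫⁻ t in Ioi (0:ℝ), Gf a f g t := by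
  have key : ∀ y : ℝ, g y * ENNReal.ofReal (f y)
      = ∫⁻ t in Ioi (0:ℝ), (if t < f y then g y else 0) := by
    intro y
    have h1 : (fun t => if t < f y then g y else 0)
        = fun t => g y * (Iio (f y)).indicator (fun _ => (1:ℝ≥0∞)) t := by
      funext t; simp [Set.indicator_apply, mul_ite]
    rw [h1, lintegral_const_mul _ (show Measurable fun t : ℝ => (Iio (f y)).indicator (fun _ => (1:ℝ≥0∞)) t from measurable_one.indicator measurableSet_Iio),
      lintegral_indicator measurableSet_Iio, setLIntegral_one,
      Measure.restrict_apply measurableSet_Iio, Set.Iio_inter_Ioi, Real.volume_Ioo,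
      sub_zero]
  have hmeas : Measurable (Function.uncurry fun y t : ℝ => if t < f y then g y else 0) := by
    have heq : (Function.uncurry fun y t : ℝ => if t < f y then g y else 0)
        = {p : ℝ × ℝ | p.2 < f p.1}.indicator (fun p => g p.1) := by
      funext p
      rcases p with ⟨y, t⟩
      simp [Function.uncurry, Set.indicator_apply]
    rw [heq]
    exact (hg.comp measurable_fst).indicator
      (measurableSet_lt measurable_snd (hmf.comp measurable_fst))
  calc ∫⁻ y in Icc (0:ℝ) a, g y * ENNReal.ofReal (f y)
      = ∫⁻ y in Icc (0:ℝ) a, ∫⁻ t in Ioi (0:ℝ), (if t < f y then g y else 0) := by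
        simp_rw [key]
    _ = ∫⁻ t in Ioi (0:ℝ), ∫⁻ y in Icc (0:ℝ) a, (if t < f y then g y else 0) :=
        lintegral_lintegral_swap hmeas.aemeasurable

lemma lint_ind_eq_D {a : ℝ} {f : ℝ → ℝ} (hmf : Measurable f) (t : ℝ) :
    ∫⁻ y in Icc (0:ℝ) a, (if t < f y then (1:ℝ≥0∞) else 0) = D a f t := by
  have h1 : (fun y => if t < f y then (1:ℝ≥0∞) else 0)
      = {y | t < f y}.indicator (fun _ => (1:ℝ≥0∞)) := by
    funext y; simp [Set.indicator_apply]
  rw [h1, lintegral_indicator (measSet_lt hmf t), setLIntegral_one,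
    Measure.restrict_apply (measSet_lt hmf t)]
  rfl

lemma Gf_le_D {a : ℝ} {f : ℝ → ℝ} (hmf : Measurable f) {g : ℝ → ℝ≥0∞}
    (hg1 : ∀ᵐ y ∂(volume.restrict (Icc (0:ℝ) a)), g y ≤ 1) (t : ℝ) :
    Gf a f g t ≤ D a f t := by
  rw [← lint_ind_eq_D hmf t]
  refine lintegral_mono_ae (hg1.mono fun y hy => ?_)
  by_cases h : t < f y <;> simp [h, hy]

lemma Gf_le_I (a : ℝ) (f : ℝ → ℝ) (g : ℝ → ℝ≥0∞) (t : ℝ) :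
    Gf a f g t ≤ ∫⁻ y in Icc (0:ℝ) a, g y := by
  refine lintegral_mono (fun y => ?_)
  by_cases h : t < f y <;> simp [h]

lemma ofReal_min (x y : ℝ) :
    ENNReal.ofReal (min x y) = min (ENNReal.ofReal x) (ENNReal.ofReal y) :=
  (show Monotone ENNReal.ofReal from fun _ _ h => ENNReal.ofReal_le_ofReal h).map_min

lemma F_tonelli {a : ℝ} (f : ℝ → ℝ) {b : ℝ} (hb : 0 < b) :
    ∫⁻ x in Ioc (0:ℝ) b, Fr a f x
      = ∫⁻ t in Ioi (0:ℝ), min (ENNReal.ofReal b) (D a f t) := by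
  have key : ∀ x : ℝ, 0 < x → Fr a f x
      = ∫⁻ t in Ioi (0:ℝ), (if ENNReal.ofReal x ≤ D a f t then (1:ℝ≥0∞) else 0) := by
    intro x hx
    have hS : MeasurableSet {t : ℝ | ENNReal.ofReal x ≤ D a f t} :=
      Set.OrdConnected.measurableSet ⟨fun t1 h1 t2 h2 z hz => le_trans h2 (D_anti a f hz.2)⟩
    have h1 : (fun t => if ENNReal.ofReal x ≤ D a f t then (1:ℝ≥0∞) else 0)
        = {t : ℝ | ENNReal.ofReal x ≤ D a f t}.indicator (fun _ => (1:ℝ≥0∞)) := by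
      funext t; simp [Set.indicator_apply]
    rw [h1, lintegral_indicator hS, setLIntegral_one, Measure.restrict_apply hS]
    unfold Fr; congr 1; ext t; simp [and_comm]
  have inner : ∀ t : ℝ,
      (∫⁻ x in Ioc (0:ℝ) b, (if ENNReal.ofReal x ≤ D a f t then (1:ℝ≥0∞) else 0))
      = min (ENNReal.ofReal b) (D a f t) := by
    intro t
    have hS : MeasurableSet {x : ℝ | ENNReal.ofReal x ≤ D a f t} :=
      measurableSet_le ENNReal.measurable_ofReal measurable_const
    have h1 : (fun x => if ENNReal.ofReal x ≤ D a f t then (1:ℝ≥0∞) else 0)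
        = {x : ℝ | ENNReal.ofReal x ≤ D a f t}.indicator (fun _ => (1:ℝ≥0∞)) := by
      funext x; simp [Set.indicator_apply]
    rw [h1, lintegral_indicator hS, setLIntegral_one, Measure.restrict_apply hS]
    have hset : {x : ℝ | ENNReal.ofReal x ≤ D a f t} ∩ Ioc 0 b
        = Ioc 0 (min b (D a f t).toReal) := by
      ext x
      simp only [mem_inter_iff, mem_setOf_eq, mem_Ioc, le_min_iff]
      constructor
      · rintro ⟨hx1, hx2, hx3⟩
        exact ⟨hx2, hx3, (ENNReal.ofReal_le_iff_le_toReal (D_ne_top a f t)).1 hx1⟩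
      · rintro ⟨hx2, hx3, hx4⟩
        exact ⟨(ENNReal.ofReal_le_iff_le_toReal (D_ne_top a f t)).2 hx4, hx2, hx3⟩
    rw [hset, Real.volume_Ioc, sub_zero, ofReal_min,
      ENNReal.ofReal_toReal (D_ne_top a f t)]
  have hmeas : Measurable (Function.uncurry
      fun x t : ℝ => if ENNReal.ofReal x ≤ D a f t then (1:ℝ≥0∞) else 0) := by
    have heq : (Function.uncurry
        fun x t : ℝ => if ENNReal.ofReal x ≤ D a f t then (1:ℝ≥0∞) else 0)
        = {p : ℝ × ℝ | ENNReal.ofReal p.1 ≤ D a f p.2}.indicator (fun _ => 1) := by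
      funext p
      rcases p with ⟨x, t⟩
      simp [Function.uncurry, Set.indicator_apply]
    rw [heq]
    exact measurable_one.indicator
      (measurableSet_le (ENNReal.measurable_ofReal.comp measurable_fst)
        ((D_meas a f).comp measurable_snd))
  calc ∫⁻ x in Ioc (0:ℝ) b, Fr a f x
      = ∫⁻ x in Ioc (0:ℝ) b,
          ∫⁻ t in Ioi (0:ℝ), (if ENNReal.ofReal x ≤ D a f t then (1:ℝ≥0∞) else 0) := by
        refine setLIntegral_congr_fun measurableSet_Ioc (fun x hx => ?_)
        exact key x hx.1
    _ = ∫⁻ t in Ioi (0:ℝ),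
          ∫⁻ x in Ioc (0:ℝ) b, (if ENNReal.ofReal x ≤ D a f t then (1:ℝ≥0∞) else 0) :=
        lintegral_lintegral_swap hmeas.aemeasurable
    _ = ∫⁻ t in Ioi (0:ℝ), min (ENNReal.ofReal b) (D a f t) :=
        lintegral_congr fun t => inner t

lemma A_fin {a M : ℝ} {f : ℝ → ℝ} (hM : ∀ x ∈ Icc (0:ℝ) a, f x ≤ M) (b : ℝ) :
    ∫⁻ t in Ioi (0:ℝ), min (ENNReal.ofReal b) (D a f t) ≠ ⊤ := by
  have hle : ∀ t : ℝ, min (ENNReal.ofReal b) (D a f t)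
      ≤ (Iic M).indicator (fun _ => ENNReal.ofReal b) t := by
    intro t
    by_cases h : t ≤ M
    · rw [Set.indicator_of_mem (show t ∈ Iic M from h)]; exact min_le_left _ _
    · rw [Set.indicator_of_notMem (by simpa using h)]
      rw [D_eq_zero hM (le_of_lt (not_le.1 h))]
      simp
  refine ne_top_of_le_ne_top ?_ (lintegral_mono hle)
  rw [lintegral_indicator measurableSet_Iic, setLIntegral_const,
    Measure.restrict_apply measurableSet_Iic]
  have : Iic M ∩ Ioi (0:ℝ) = Ioc 0 M := by ext z; simp [and_comm]
  rw [this, Real.volume_Ioc]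
  exact ENNReal.mul_ne_top ENNReal.ofReal_ne_top ENNReal.ofReal_ne_top

lemma ae_eq_of_le_of_lintegral_le {α : Type*} [MeasurableSpace α] {μ : Measure α}
    {g h : α → ℝ≥0∞} (hg : AEMeasurable g μ) (hh : AEMeasurable h μ)
    (hle : g ≤ᵐ[μ] h) (hfin : ∫⁻ x, g x ∂μ ≠ ⊤)
    (hint : ∫⁻ x, h x ∂μ ≤ ∫⁻ x, g x ∂μ) : g =ᵐ[μ] h := by
  have hsub : ∫⁻ x, h x - g x ∂μ = ∫⁻ x, h x ∂μ - ∫⁻ x, g x ∂μ :=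
    lintegral_sub' hg hfin hle
  have h0 : ∫⁻ x, h x - g x ∂μ = 0 := by rw [hsub]; exact tsub_eq_zero_of_le hint
  have hz := (lintegral_eq_zero_iff' (hh.sub hg)).1 h0
  filter_upwards [hz, hle] with x h1 h2
  have h3 : h x - g x = 0 := by simpa using h1
  exact le_antisymm h2 (tsub_eq_zero_iff_le.1 h3)

lemma rearr_nonneg (a : ℝ) (f : ℝ → ℝ) (x : ℝ) : 0 ≤ rearr a f x := by
  unfold rearr
  exact integral_nonneg fun t => Set.indicator_nonneg (fun _ _ => zero_le_one) x

lemma c_pos {a b : ℝ} {f : ℝ → ℝ} (hdec : StrictDecRightAt (rearr a f) b) :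
    0 < rearr a f b := by
  obtain ⟨ε0, hε0, h⟩ := hdec
  exact lt_of_le_of_lt (rearr_nonneg a f (b + ε0/2))
    (h (ε0/2) (by linarith) (by linarith))

lemma D_ge_on {a b : ℝ} {f : ℝ → ℝ} (hb : 0 < b) {t : ℝ}
    (ht : t ∈ Ioo 0 (rearr a f b)) : ENNReal.ofReal b ≤ D a f t := by
  by_contra h
  push_neg at h
  have hsub : {s | 0 < s ∧ ENNReal.ofReal b ≤ D a f s} ⊆ Ioc 0 t := by
    rintro s ⟨hs0, hsb⟩
    refine ⟨hs0, ?_⟩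
    by_contra hst
    exact absurd (le_trans hsb (D_anti a f (le_of_lt (not_le.1 hst)))) (not_le.2 h)
  have h1 : Fr a f b ≤ ENNReal.ofReal t := by
    calc Fr a f b ≤ volume (Ioc 0 t) := measure_mono hsub
      _ = ENNReal.ofReal t := by simp [Real.volume_Ioc]
  have h2 : rearr a f b ≤ t := by
    rw [rearr_eq hb]
    calc (Fr a f b).toReal ≤ (ENNReal.ofReal t).toReal :=
        ENNReal.toReal_mono ENNReal.ofReal_ne_top h1
      _ = t := ENNReal.toReal_ofReal ht.1.le
  exact absurd h2 (not_le.2 ht.2)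

lemma D_lt_after {a b M : ℝ} {f : ℝ → ℝ} (hM : ∀ x ∈ Icc (0:ℝ) a, f x ≤ M)
    (hb : 0 < b) (hc : 0 < rearr a f b) {t : ℝ} (ht : rearr a f b < t) :
    D a f t < ENNReal.ofReal b := by
  by_contra h
  push_neg at h
  have hsub : Ioc 0 t ⊆ {s | 0 < s ∧ ENNReal.ofReal b ≤ D a f s} :=
    fun s hs => ⟨hs.1, le_trans h (D_anti a f hs.2)⟩
  have h1 : ENNReal.ofReal t ≤ Fr a f b := by
    calc ENNReal.ofReal t = volume (Ioc (0:ℝ) t) := by simp [Real.volume_Ioc]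
      _ ≤ Fr a f b := measure_mono hsub
  have h2 : t ≤ rearr a f b := by
    rw [rearr_eq hb]
    have h3 := ENNReal.toReal_mono (Fr_ne_top hM hb) h1
    rwa [ENNReal.toReal_ofReal (le_of_lt (lt_trans hc ht))] at h3
  exact absurd h2 (not_le.2 ht)

lemma vol_level {a b M : ℝ} {f : ℝ → ℝ} (hmf : Measurable f)
    (hM : ∀ x ∈ Icc (0:ℝ) a, f x ≤ M) (hb : 0 < b)
    (hdec : StrictDecRightAt (rearr a f) b) :
    volume ({y | rearr a f b ≤ f y} ∩ Icc 0 a) = ENNReal.ofReal b := by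
  set c := rearr a f b with hcdef
  have hc : 0 < c := c_pos hdec
  set V := volume ({y | c ≤ f y} ∩ Icc 0 a) with hVdef
  have hVa : V ≤ ENNReal.ofReal a := by
    calc V ≤ volume (Icc (0:ℝ) a) := measure_mono inter_subset_right
      _ = ENNReal.ofReal a := by simp [Real.volume_Icc]
  have hVtop : V ≠ ⊤ := (hVa.trans_lt ENNReal.ofReal_lt_top).ne
  -- sequence t_n increasing to c
  have hseq : ∀ n : ℕ, c - c / (n + 2) ∈ Ioo 0 c := by
    intro n
    have h1 : c / ((n:ℝ)+2) < c := by
      apply div_lt_self hc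
      have : (0:ℝ) ≤ (n:ℝ) := Nat.cast_nonneg n
      linarith
    have h2 : 0 < c / ((n:ℝ)+2) := by positivity
    exact ⟨by linarith, by linarith⟩
  have htend : Filter.Tendsto (fun n : ℕ => c - c/((n:ℝ)+2)) Filter.atTop (nhds c) := by
    have h1 : Filter.Tendsto (fun n : ℕ => ((n:ℝ)+2)) Filter.atTop Filter.atTop :=
      Filter.tendsto_atTop_add_const_right _ 2 tendsto_natCast_atTop_atTop
    have h2 : Filter.Tendsto (fun n : ℕ => c/((n:ℝ)+2)) Filter.atTop (nhds 0) :=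
      Filter.Tendsto.div_atTop tendsto_const_nhds h1
    simpa using tendsto_const_nhds.sub h2
  have hanti : Antitone fun n : ℕ => {y | c - c/((n:ℝ)+2) < f y} ∩ Icc (0:ℝ) a := by
    intro m n hmn
    have hcast : ((m:ℝ)+2) ≤ ((n:ℝ)+2) := by
      have : (m:ℝ) ≤ (n:ℝ) := Nat.cast_le.2 hmn
      linarith
    have hdiv : c / ((n:ℝ)+2) ≤ c / ((m:ℝ)+2) := by
      apply div_le_div_of_nonneg_left hc.le (by positivity) hcast
    intro y hy
    obtain ⟨hy1, hy2⟩ := hy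
    refine ⟨?_, hy2⟩
    have : c - c/((m:ℝ)+2) ≤ c - c/((n:ℝ)+2) := by linarith
    exact lt_of_le_of_lt this hy1
  have hInter : (⋂ n : ℕ, ({y | c - c/((n:ℝ)+2) < f y} ∩ Icc (0:ℝ) a))
      = {y | c ≤ f y} ∩ Icc 0 a := by
    ext y
    simp only [mem_iInter, mem_inter_iff, mem_setOf_eq]
    constructor
    · intro h
      refine ⟨?_, (h 0).2⟩
      by_contra hlt
      push_neg at hlt
      obtain ⟨n, hn⟩ := (htend.eventually (eventually_gt_nhds hlt)).exists
      exact absurd (h n).1 (not_lt.2 hn.le)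
    · rintro ⟨h1, h2⟩
      exact fun n => ⟨lt_of_lt_of_le (hseq n).2 h1, h2⟩
  have htm := tendsto_measure_iInter_atTop
    (μ := volume) (s := fun n : ℕ => {y | c - c/((n:ℝ)+2) < f y} ∩ Icc (0:ℝ) a)
    (fun n => ((measSet_lt hmf _).inter measurableSet_Icc).nullMeasurableSet)
    hanti ⟨0, (((measure_mono inter_subset_right).trans_lt
      (by simp [Real.volume_Icc])).ne)⟩
  rw [hInter] at htm
  have hge : ENNReal.ofReal b ≤ V :=
    ge_of_tendsto' htm (fun n => D_ge_on hb (hseq n))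
  -- now ≤ via hdec
  refine le_antisymm ?_ hge
  by_contra hlt
  push_neg at hlt
  have hbV : b < V.toReal := by
    have := (ENNReal.toReal_lt_toReal ENNReal.ofReal_ne_top hVtop).2 hlt
    rwa [ENNReal.toReal_ofReal hb.le] at this
  obtain ⟨ε0, hε0, hdecp⟩ := hdec
  set ε := min (ε0/2) ((V.toReal - b)/2) with hεdef
  have hε : 0 < ε := lt_min (by linarith) (by linarith)
  have hεε0 : ε < ε0 := lt_of_le_of_lt (min_le_left _ _) (by linarith)
  have hbe : ENNReal.ofReal (b + ε) ≤ V := by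
    rw [← ENNReal.ofReal_toReal hVtop]
    apply ENNReal.ofReal_le_ofReal
    have : ε ≤ (V.toReal - b)/2 := min_le_right _ _
    linarith
  have hsub : Ioo 0 c ⊆ {t | 0 < t ∧ ENNReal.ofReal (b+ε) ≤ D a f t} := by
    intro t ht
    refine ⟨ht.1, le_trans hbe (measure_mono fun y hy => ?_)⟩
    exact ⟨lt_of_lt_of_le ht.2 hy.1, hy.2⟩
  have h1 : ENNReal.ofReal c ≤ Fr a f (b+ε) := by
    calc ENNReal.ofReal c = volume (Ioo (0:ℝ) c) := by simp [Real.volume_Ioo]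
      _ ≤ Fr a f (b+ε) := measure_mono hsub
  have h2 : c ≤ rearr a f (b+ε) := by
    rw [rearr_eq (by linarith : (0:ℝ) < b+ε)]
    have h3 := ENNReal.toReal_mono (Fr_ne_top hM (by linarith : (0:ℝ) < b+ε)) h1
    rwa [ENNReal.toReal_ofReal hc.le] at h3
  exact absurd h2 (not_le.2 (hdecp ε hε hεε0))

lemma ae_ne_const (c : ℝ) : ∀ᵐ x : ℝ ∂volume, x ≠ c := by
  refine ae_iff.2 ?_
  have h : {x : ℝ | ¬ x ≠ c} = {c} := by ext x; simp
  rw [h]; exact measure_singleton c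

lemma mem_ae_icc (a : ℝ) : ∀ᵐ y ∂(volume.restrict (Icc (0:ℝ) a)), y ∈ Icc (0:ℝ) a :=
  (ae_restrict_iff' measurableSet_Icc).2 (ae_of_all _ fun _ hy => hy)

lemma boch_eq {a : ℝ} {f β : ℝ → ℝ} (hmf : Measurable f) (hmβ : Measurable β)
    (hnn : ∀ x ∈ Icc (0:ℝ) a, 0 ≤ f x)
    (hβ : ∀ t ∈ Icc (0:ℝ) a, β t ∈ Icc (0:ℝ) 1) :
    ∫ t in Icc (0:ℝ) a, β t * f t
      = (∫⁻ t in Ioi (0:ℝ), Gf a f (fun y => ENNReal.ofReal (β y)) t).toReal := by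
  have h1 : ∫ t in Icc (0:ℝ) a, β t * f t
      = (∫⁻ t in Icc (0:ℝ) a, ENNReal.ofReal (β t * f t)).toReal := by
    refine integral_eq_lintegral_of_nonneg_ae ?_ (hmβ.mul hmf).aestronglyMeasurable
    exact (mem_ae_icc a).mono fun y hy => mul_nonneg (hβ y hy).1 (hnn y hy)
  have h2 : ∫⁻ t in Icc (0:ℝ) a, ENNReal.ofReal (β t * f t)
      = ∫⁻ t in Icc (0:ℝ) a, ENNReal.ofReal (β t) * ENNReal.ofReal (f t) := by
    refine lintegral_congr_ae ((mem_ae_icc a).mono fun y hy => ?_)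
    exact ENNReal.ofReal_mul (hβ y hy).1
  rw [h1, h2, tonelli hmf (fun y => ENNReal.ofReal (β y))
    (ENNReal.measurable_ofReal.comp hmβ)]

lemma I_fin {a : ℝ} {β : ℝ → ℝ} (hβ : ∀ t ∈ Icc (0:ℝ) a, β t ∈ Icc (0:ℝ) 1) :
    ∫⁻ y in Icc (0:ℝ) a, ENNReal.ofReal (β y) ≠ ⊤ := by
  refine ne_top_of_le_ne_top ?_
    (lintegral_mono_ae ((mem_ae_icc a).mono fun y hy =>
      ENNReal.ofReal_le_one.2 (hβ y hy).2))
  rw [setLIntegral_one]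
  simp [Real.volume_Icc]

lemma I_eq {a : ℝ} {β : ℝ → ℝ} (hmβ : Measurable β)
    (hβ : ∀ t ∈ Icc (0:ℝ) a, β t ∈ Icc (0:ℝ) 1) :
    ∫⁻ y in Icc (0:ℝ) a, ENNReal.ofReal (β y)
      = ENNReal.ofReal (∫ t in Icc (0:ℝ) a, β t) := by
  rw [integral_eq_lintegral_of_nonneg_ae
    ((mem_ae_icc a).mono fun y hy => (hβ y hy).1) hmβ.aestronglyMeasurable,
    ENNReal.ofReal_toReal (I_fin hβ)]

lemma rhs_eq {a b M : ℝ} {f : ℝ → ℝ} (hM : ∀ x ∈ Icc (0:ℝ) a, f x ≤ M)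
    (hb : 0 < b) :
    ∫ x in Icc (0:ℝ) b, rearr a f x
      = (∫⁻ t in Ioi (0:ℝ), min (ENNReal.ofReal b) (D a f t)).toReal := by
  have hne : ∀ᵐ x ∂(volume.restrict (Icc (0:ℝ) b)), x ≠ 0 :=
    ae_restrict_of_ae (ae_ne_const 0)
  have hmem : ∀ᵐ x ∂(volume.restrict (Icc (0:ℝ) b)), x ∈ Icc (0:ℝ) b :=
    (ae_restrict_iff' measurableSet_Icc).2 (ae_of_all _ fun _ hy => hy)
  have hcong : ∀ᵐ x ∂(volume.restrict (Icc (0:ℝ) b)),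
      rearr a f x = (Fr a f x).toReal := by
    filter_upwards [hne, hmem] with x hx1 hx2
    exact rearr_eq (lt_of_le_of_ne hx2.1 (Ne.symm hx1))
  have h1 : ∫ x in Icc (0:ℝ) b, rearr a f x
      = ∫ x in Icc (0:ℝ) b, (Fr a f x).toReal := integral_congr_ae hcong
  have h2 : ∫ x in Icc (0:ℝ) b, (Fr a f x).toReal
      = (∫⁻ x in Icc (0:ℝ) b, Fr a f x).toReal := by
    rw [integral_eq_lintegral_of_nonneg_ae (ae_of_all _ fun x => ENNReal.toReal_nonneg)
      (ENNReal.measurable_toReal.comp (Fr_anti a f).measurable).aestronglyMeasurable]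
    congr 1
    refine lintegral_congr_ae ?_
    filter_upwards [hne, hmem] with x hx1 hx2
    rw [ENNReal.ofReal_toReal (Fr_ne_top hM (lt_of_le_of_ne hx2.1 (Ne.symm hx1)))]
  have h3 : ∫⁻ x in Icc (0:ℝ) b, Fr a f x = ∫⁻ x in Ioc (0:ℝ) b, Fr a f x := by
    rw [Measure.restrict_congr_set Ioc_ae_eq_Icc]
  rw [h1, h2, h3, F_tonelli f hb]

lemma Gf_ind {a : ℝ} {f : ℝ → ℝ} (hmf : Measurable f) (c t : ℝ) :
    Gf a f (fun y => ENNReal.ofReal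
        (Set.indicator {y | c ≤ f y} (fun _ => (1:ℝ)) y)) t
      = volume (({y | t < f y} ∩ {y | c ≤ f y}) ∩ Icc 0 a) := by
  unfold Gf
  have hS : MeasurableSet ({y | t < f y} ∩ {y | c ≤ f y}) :=
    (measSet_lt hmf t).inter (hmf measurableSet_Ici)
  have h1 : (fun y => if t < f y then ENNReal.ofReal
        (Set.indicator {y | c ≤ f y} (fun _ => (1:ℝ)) y) else 0)
      = ({y | t < f y} ∩ {y | c ≤ f y}).indicator (fun _ => (1:ℝ≥0∞)) := by
    funext y
    by_cases h : t < f y <;> by_cases h2 : c ≤ f y <;>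
      simp [h, h2, Set.indicator_apply]
  rw [h1, lintegral_indicator hS, setLIntegral_one, Measure.restrict_apply hS]

theorem stmt16 (a : ℝ) (ha : 0 < a) (f : ℝ → ℝ) (hmf : Measurable f)
    (hnn : ∀ x ∈ Set.Icc (0:ℝ) a, 0 ≤ f x)
    (hbd : ∃ M : ℝ, ∀ x ∈ Set.Icc (0:ℝ) a, f x ≤ M) (b : ℝ) (hb : b ∈ Set.Ioo 0 a)
    (hdec : StrictDecRightAt (rearr a f) b) :
    (∫ t in Set.Icc (0:ℝ) a,
        Set.indicator {t | rearr a f b ≤ f t} (fun _ => (1:ℝ)) t * f t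
      = ∫ t in Set.Icc (0:ℝ) b, rearr a f t) ∧
    (∀ β : ℝ → ℝ, Measurable β → (∀ t ∈ Set.Icc (0:ℝ) a, β t ∈ Set.Icc (0:ℝ) 1) →
        (∫ t in Set.Icc (0:ℝ) a, β t ≤ b) →
        (∫ t in Set.Icc (0:ℝ) a, β t * f t ≤ ∫ t in Set.Icc (0:ℝ) b, rearr a f t) ∧
        ((∫ t in Set.Icc (0:ℝ) a, β t * f t = ∫ t in Set.Icc (0:ℝ) b, rearr a f t) →
          ∀ᵐ t ∂(volume.restrict (Set.Icc (0:ℝ) a)),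
            β t = Set.indicator {t | rearr a f b ≤ f t} (fun _ => (1:ℝ)) t)) := by
  obtain ⟨M, hM⟩ := hbd
  have hb0 : 0 < b := hb.1
  set c := rearr a f b with hcdef
  have hc : 0 < c := c_pos hdec
  set A := ∫⁻ t in Ioi (0:ℝ), min (ENNReal.ofReal b) (D a f t) with hAdef
  have hAfin : A ≠ ⊤ := A_fin hM b
  have hRHS : ∫ x in Icc (0:ℝ) b, rearr a f x = A.toReal := rhs_eq hM hb0
  have hV : volume ({y | c ≤ f y} ∩ Icc 0 a) = ENNReal.ofReal b :=
    vol_level hmf hM hb0 hdec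
  have hmin_lt : ∀ t : ℝ, t ∈ Ioo 0 c →
      min (ENNReal.ofReal b) (D a f t) = ENNReal.ofReal b :=
    fun t ht => min_eq_left (D_ge_on hb0 ht)
  have hmin_gt : ∀ t : ℝ, c < t → min (ENNReal.ofReal b) (D a f t) = D a f t :=
    fun t ht => min_eq_right (D_lt_after hM hb0 hc ht).le
  -- part 1
  have hβ₀mem : ∀ t ∈ Icc (0:ℝ) a,
      Set.indicator {y | c ≤ f y} (fun _ => (1:ℝ)) t ∈ Icc (0:ℝ) 1 := by
    intro t _
    by_cases h : c ≤ f t <;> simp [Set.indicator_apply, h]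
  have hmβ₀ : Measurable (Set.indicator {y | c ≤ f y} (fun _ => (1:ℝ))) :=
    measurable_const.indicator (hmf measurableSet_Ici)
  have hG0 : ∀ᵐ t ∂(volume.restrict (Ioi (0:ℝ))),
      Gf a f (fun y => ENNReal.ofReal
        (Set.indicator {y | c ≤ f y} (fun _ => (1:ℝ)) y)) t
      = min (ENNReal.ofReal b) (D a f t) := by
    have hne : ∀ᵐ t ∂(volume.restrict (Ioi (0:ℝ))), t ≠ c :=
      ae_restrict_of_ae (ae_ne_const c)
    have hmem : ∀ᵐ t ∂(volume.restrict (Ioi (0:ℝ))), t ∈ Ioi (0:ℝ) :=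
      (ae_restrict_iff' measurableSet_Ioi).2 (ae_of_all _ fun _ h => h)
    filter_upwards [hne, hmem] with t ht1 ht2
    rw [Gf_ind hmf c t]
    rcases lt_or_gt_of_ne ht1 with hlt | hgt
    · have hset : {y | t < f y} ∩ {y | c ≤ f y} = {y | c ≤ f y} := by
        ext y
        simp only [mem_inter_iff, mem_setOf_eq, and_iff_right_iff_imp]
        exact fun h => lt_of_lt_of_le hlt h
      rw [hset, hV, hmin_lt t ⟨ht2, hlt⟩]
    · have hset : {y | t < f y} ∩ {y | c ≤ f y} = {y | t < f y} := by
        ext y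
        simp only [mem_inter_iff, mem_setOf_eq, and_iff_left_iff_imp]
        exact fun h => le_of_lt (lt_trans hgt h)
      rw [hset, hmin_gt t hgt]
      rfl
  have hPart1 : ∫ t in Icc (0:ℝ) a,
      Set.indicator {y | c ≤ f y} (fun _ => (1:ℝ)) t * f t = A.toReal := by
    rw [boch_eq hmf hmβ₀ hnn hβ₀mem]
    congr 1
    exact lintegral_congr_ae hG0
  refine ⟨by rw [hPart1, hRHS], ?_⟩
  intro β hmβ hβmem hβint
  set gβ : ℝ → ℝ≥0∞ := fun y => ENNReal.ofReal (β y) with hgβ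
  have hmgβ : Measurable gβ := ENNReal.measurable_ofReal.comp hmβ
  have hβae : ∀ᵐ y ∂(volume.restrict (Icc (0:ℝ) a)), gβ y ≤ 1 :=
    (mem_ae_icc a).mono fun y hy => ENNReal.ofReal_le_one.2 (hβmem y hy).2
  have hIle : ∫⁻ y in Icc (0:ℝ) a, gβ y ≤ ENNReal.ofReal b := by
    rw [I_eq hmβ hβmem]; exact ENNReal.ofReal_le_ofReal hβint
  have hGle : ∀ t : ℝ, Gf a f gβ t ≤ min (ENNReal.ofReal b) (D a f t) :=
    fun t => le_min ((Gf_le_I a f gβ t).trans hIle) (Gf_le_D hmf hβae t)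
  have hBoch : ∫ t in Icc (0:ℝ) a, β t * f t
      = (∫⁻ t in Ioi (0:ℝ), Gf a f gβ t).toReal := boch_eq hmf hmβ hnn hβmem
  have hGfin : ∫⁻ t in Ioi (0:ℝ), Gf a f gβ t ≠ ⊤ :=
    ne_top_of_le_ne_top hAfin (lintegral_mono hGle)
  have hineq : ∫ t in Icc (0:ℝ) a, β t * f t ≤ ∫ x in Icc (0:ℝ) b, rearr a f x := by
    rw [hBoch, hRHS]
    exact ENNReal.toReal_mono hAfin (lintegral_mono hGle)
  refine ⟨hineq, ?_⟩
  intro heq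
  have hGA : ∫⁻ t in Ioi (0:ℝ), Gf a f gβ t = A := by
    rw [hBoch, hRHS] at heq
    exact (ENNReal.toReal_eq_toReal_iff' hGfin hAfin).1 heq
  have haeG : (fun t => Gf a f gβ t) =ᵐ[volume.restrict (Ioi (0:ℝ))]
      (fun t => min (ENNReal.ofReal b) (D a f t)) := by
    refine ae_eq_of_le_of_lintegral_le (Gf_anti a f gβ).measurable.aemeasurable
      (measurable_const.min (D_meas a f)).aemeasurable (ae_of_all _ hGle) hGfin ?_
    rw [hGA]
  have hgood : ∀ s : Set ℝ, s ⊆ Ioi (0:ℝ) → volume s ≠ 0 →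
      ∃ t ∈ s, Gf a f gβ t = min (ENNReal.ofReal b) (D a f t) := by
    intro s hs hvs
    by_contra h
    push_neg at h
    have hsub : s ⊆ {t | ¬ Gf a f gβ t = min (ENNReal.ofReal b) (D a f t)} ∩ Ioi 0 :=
      fun t ht => ⟨h t ht, hs ht⟩
    have h0 := ae_iff.1 haeG
    rw [Measure.restrict_apply' measurableSet_Ioi] at h0
    exact hvs (measure_mono_null hsub h0)
  -- per-point consequences
  have hzero : ∀ t ∈ Ioo 0 c,
      Gf a f gβ t = min (ENNReal.ofReal b) (D a f t) →
      (∀ᵐ y ∂(volume.restrict (Icc (0:ℝ) a)), f y ≤ t → β y = 0) := by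
    intro t ht hPt
    rw [hmin_lt t ht] at hPt
    have hIeq : ∫⁻ y in Icc (0:ℝ) a, gβ y = Gf a f gβ t :=
      le_antisymm (hIle.trans (le_of_eq hPt.symm)) (Gf_le_I a f gβ t)
    have haux := ae_eq_of_le_of_lintegral_le
      (μ := volume.restrict (Icc (0:ℝ) a))
      (g := fun y => if t < f y then gβ y else 0) (h := gβ)
      (Measurable.ite (measSet_lt hmf t) hmgβ measurable_const).aemeasurable
      hmgβ.aemeasurable
      (ae_of_all _ fun y => by by_cases h : t < f y <;> simp [h])
      (by
        show Gf a f gβ t ≠ ⊤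
        rw [hPt]; exact ENNReal.ofReal_ne_top)
      (le_of_eq hIeq)
    filter_upwards [haux, mem_ae_icc a] with y h1 h2 hfy
    rw [if_neg (not_lt.2 hfy)] at h1
    exact le_antisymm (by
      have : ENNReal.ofReal (β y) = 0 := h1.symm
      exact ENNReal.ofReal_eq_zero.1 this) (hβmem y h2).1
  have hone : ∀ t : ℝ, c < t →
      Gf a f gβ t = min (ENNReal.ofReal b) (D a f t) →
      (∀ᵐ y ∂(volume.restrict (Icc (0:ℝ) a)), t < f y → β y = 1) := by
    intro t ht hPt
    rw [hmin_gt t ht] at hPt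
    have haux := ae_eq_of_le_of_lintegral_le
      (μ := volume.restrict (Icc (0:ℝ) a))
      (g := fun y => if t < f y then gβ y else 0)
      (h := fun y => if t < f y then (1:ℝ≥0∞) else 0)
      (Measurable.ite (measSet_lt hmf t) hmgβ measurable_const).aemeasurable
      (Measurable.ite (measSet_lt hmf t) measurable_const measurable_const).aemeasurable
      (hβae.mono fun y hy => by by_cases h : t < f y <;> simp [h, hy])
      (by
        show Gf a f gβ t ≠ ⊤
        rw [hPt]; exact D_ne_top a f t)
      (by
        rw [lint_ind_eq_D hmf t]
        show D a f t ≤ Gf a f gβ t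
        rw [hPt])
    filter_upwards [haux, mem_ae_icc a] with y h1 h2 hfy
    rw [if_pos hfy, if_pos hfy] at h1
    exact le_antisymm (hβmem y h2).2 (ENNReal.one_le_ofReal.1 (le_of_eq h1.symm))
  -- choose sequences
  have hseqpos : ∀ n : ℕ, (0:ℝ) < c - c/((n:ℝ)+2) := by
    intro n
    have h2 : c / ((n:ℝ)+2) < c := by
      apply div_lt_self hc
      have : (0:ℝ) ≤ (n:ℝ) := Nat.cast_nonneg n
      linarith
    linarith
  have hex1 : ∀ n : ℕ, ∃ t ∈ Ioo (c - c/((n:ℝ)+2)) c,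
      Gf a f gβ t = min (ENNReal.ofReal b) (D a f t) := by
    intro n
    refine hgood _ (fun t ht => lt_trans (hseqpos n) ht.1) ?_
    rw [Real.volume_Ioo]
    simp only [ne_eq, ENNReal.ofReal_eq_zero, not_le]
    have : 0 < c/((n:ℝ)+2) := by positivity
    linarith
  choose t1 ht1 hP1 using hex1
  have hex2 : ∀ n : ℕ, ∃ t ∈ Ioo c (c + 1/((n:ℝ)+1)),
      Gf a f gβ t = min (ENNReal.ofReal b) (D a f t) := by
    intro n
    refine hgood _ (fun t ht => lt_trans hc ht.1) ?_
    rw [Real.volume_Ioo]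
    simp only [ne_eq, ENNReal.ofReal_eq_zero, not_le]
    have : 0 < 1/((n:ℝ)+1) := by positivity
    linarith
  choose t2 ht2 hP2 using hex2
  have hβ0 : ∀ᵐ y ∂(volume.restrict (Icc (0:ℝ) a)), f y < c → β y = 0 := by
    have hall := ae_all_iff.2 (fun n =>
      hzero (t1 n) ⟨lt_trans (hseqpos n) (ht1 n).1, (ht1 n).2⟩ (hP1 n))
    filter_upwards [hall] with y hy hfy
    have htend : Filter.Tendsto (fun n : ℕ => c - c/((n:ℝ)+2)) Filter.atTop (nhds c) := by
      have h1 : Filter.Tendsto (fun n : ℕ => ((n:ℝ)+2)) Filter.atTop Filter.atTop :=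
        Filter.tendsto_atTop_add_const_right _ 2 tendsto_natCast_atTop_atTop
      have h2 : Filter.Tendsto (fun n : ℕ => c/((n:ℝ)+2)) Filter.atTop (nhds 0) :=
        Filter.Tendsto.div_atTop tendsto_const_nhds h1
      simpa using tendsto_const_nhds.sub h2
    obtain ⟨n, hn⟩ := (htend.eventually (eventually_gt_nhds hfy)).exists
    exact hy n (le_of_lt (lt_trans hn (ht1 n).1))
  have hβ1 : ∀ᵐ y ∂(volume.restrict (Icc (0:ℝ) a)), c < f y → β y = 1 := by
    have hall := ae_all_iff.2 (fun n => hone (t2 n) (ht2 n).1 (hP2 n))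
    filter_upwards [hall] with y hy hfy
    have htend2 : Filter.Tendsto (fun n : ℕ => c + 1/((n:ℝ)+1)) Filter.atTop (nhds c) := by
      simpa using (tendsto_const_nhds (x := c)).add tendsto_one_div_add_atTop_nhds_zero_nat
    obtain ⟨n, hn⟩ := (htend2.eventually (eventually_lt_nhds hfy)).exists
    exact hy n (lt_trans (ht2 n).2 hn)
  -- total mass is b
  have hIeqb : ∫⁻ y in Icc (0:ℝ) a, gβ y = ENNReal.ofReal b := by
    have h1 := hP1 0
    rw [hmin_lt _ ⟨lt_trans (hseqpos 0) (ht1 0).1, (ht1 0).2⟩] at h1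
    exact le_antisymm hIle (h1 ▸ Gf_le_I a f gβ (t1 0))
  -- middle level set
  set S0 := {y | f y = c} ∩ Icc (0:ℝ) a with hS0def
  have hS0m : MeasurableSet S0 :=
    (hmf (measurableSet_singleton c)).inter measurableSet_Icc
  have hsetU : ({y | c < f y} ∩ Icc (0:ℝ) a) ∪ S0 = {y | c ≤ f y} ∩ Icc 0 a := by
    ext y
    simp only [hS0def, mem_union, mem_inter_iff, mem_setOf_eq]
    constructor
    · rintro (⟨h1, h2⟩ | ⟨h1, h2⟩)
      exacts [⟨h1.le, h2⟩, ⟨le_of_eq h1.symm, h2⟩]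
    · rintro ⟨h1, h2⟩
      rcases lt_or_eq_of_le h1 with h | h
      exacts [Or.inl ⟨h, h2⟩, Or.inr ⟨h.symm, h2⟩]
  have hdisj : Disjoint ({y | c < f y} ∩ Icc (0:ℝ) a) S0 := by
    refine Set.disjoint_left.2 ?_
    rintro y ⟨h1, _⟩ ⟨h2, _⟩
    exact absurd h2 (ne_of_gt h1)
  have hW : volume ({y | c < f y} ∩ Icc (0:ℝ) a) + volume S0 = ENNReal.ofReal b := by
    rw [← measure_union hdisj hS0m, hsetU, hV]
  have hfin1 : volume ({y | c < f y} ∩ Icc (0:ℝ) a) ≠ ⊤ := by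
    refine ((measure_mono inter_subset_right).trans_lt ?_).ne
    simp [Real.volume_Icc]
  -- decompose the integral of gβ
  have hsplit : ∀ᵐ y ∂(volume.restrict (Icc (0:ℝ) a)),
      gβ y = ({y | c < f y}).indicator (fun _ => (1:ℝ≥0∞)) y + S0.indicator gβ y := by
    filter_upwards [hβ0, hβ1, mem_ae_icc a] with y h0 h1 hy
    rcases lt_trichotomy (f y) c with h | h | h
    · rw [Set.indicator_of_notMem (by simp [not_lt.2 h.le] : y ∉ {y | c < f y}),
        Set.indicator_of_notMem (by simp [hS0def, h.ne] : y ∉ S0)]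
      simp [hgβ, h0 h]
    · rw [Set.indicator_of_notMem (by simp [h] : y ∉ {y | c < f y}),
        Set.indicator_of_mem (show y ∈ S0 from ⟨h, hy⟩)]
      simp
    · rw [Set.indicator_of_mem (show y ∈ {y | c < f y} from h),
        Set.indicator_of_notMem (by simp [hS0def, h.ne'] : y ∉ S0)]
      simp [hgβ, h1 h]
  have hIdecomp : ∫⁻ y in Icc (0:ℝ) a, gβ y
      = volume ({y | c < f y} ∩ Icc (0:ℝ) a) + ∫⁻ y in S0, gβ y := by
    rw [lintegral_congr_ae hsplit,
      lintegral_add_left (show Measurable fun y : ℝ => ({y | c < f y}).indicator (fun _ => (1:ℝ≥0∞)) y from measurable_one.indicator (measSet_lt hmf c)) _,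
      lintegral_indicator (measSet_lt hmf c), setLIntegral_one,
      Measure.restrict_apply (measSet_lt hmf c),
      lintegral_indicator hS0m, Measure.restrict_restrict hS0m,
      Set.inter_eq_left.2 (inter_subset_right : S0 ⊆ Icc (0:ℝ) a)]
  have hW2 : ∫⁻ y in S0, gβ y = volume S0 := by
    refine (ENNReal.add_right_inj hfin1).1 ?_
    rw [← hIdecomp, hIeqb, ← hW]
  have hβmid : ∀ᵐ y ∂(volume.restrict S0), β y = 1 := by
    have haux := ae_eq_of_le_of_lintegral_le (μ := volume.restrict S0)
      (g := gβ) (h := fun _ => (1:ℝ≥0∞))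
      hmgβ.aemeasurable measurable_const.aemeasurable
      ((ae_restrict_iff' hS0m).2 (ae_of_all _ fun y hy =>
        ENNReal.ofReal_le_one.2 (hβmem y hy.2).2))
      (by
        rw [hW2]
        refine ((measure_mono inter_subset_right).trans_lt ?_).ne
        simp [Real.volume_Icc])
      (by rw [lintegral_one, Measure.restrict_apply_univ, hW2])
    have hmem0 : ∀ᵐ y ∂(volume.restrict S0), y ∈ S0 :=
      (ae_restrict_iff' hS0m).2 (ae_of_all _ fun _ hy => hy)
    filter_upwards [haux, hmem0] with y h1 h2
    exact le_antisymm (hβmem y h2.2).2 (ENNReal.one_le_ofReal.1 (le_of_eq h1.symm))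
  have hβmid' : ∀ᵐ y ∂(volume.restrict (Icc (0:ℝ) a)), f y = c → β y = 1 := by
    have h1 := (ae_restrict_iff' hS0m).1 hβmid
    have h2 : ∀ᵐ y ∂(volume.restrict (Icc (0:ℝ) a)), y ∈ S0 → β y = 1 :=
      ae_restrict_of_ae h1
    filter_upwards [h2, mem_ae_icc a] with y hy1 hy2 hfy
    exact hy1 ⟨hfy, hy2⟩
  filter_upwards [hβ0, hβ1, hβmid'] with y h0 h1 hmid
  rcases lt_trichotomy (f y) c with h | h | h
  · rw [Set.indicator_of_notMem (by simp [not_le.2 h] : y ∉ {t | c ≤ f t})]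
    exact h0 h
  · rw [Set.indicator_of_mem (show y ∈ {t | c ≤ f t} from le_of_eq h.symm)]
    exact hmid h
  · rw [Set.indicator_of_mem (show y ∈ {t | c ≤ f t} from h.le)]
    exact h1 h
end

section
/- Consider the time-varying actuator placement problem: maximize Tr(W_V) = ∫₀^T Σᵢ vᵢ(t)² fᵢ(t) dt over measurable vᵢ : [0,T] → [0,1], i = 1,…,m, subject to Σᵢ ∫₀^T |vᵢ(t)| dt ≤ α, where fᵢ(t) = bᵢᵀ e^{Aᵀt} e^{At} bᵢ and α ∈ (0, mT). Let F : [0,mT] → ℝ be the concatenation F(t) = fᵢ(t − (i−1)T) for t ∈ [(i−1)T, iT), and F* its asymmetric decreasing rearrangement. Then for every feasible choice of (v₁,…,v_m), Tr(W_V) ≤ ∫₀^α F*(t) dt, and this bound is achieved by the binary choice vᵢ(t) = 𝟙_{{fᵢ(t) ≥ F*(α)}}(t) when F* is strictly decreasing to the right at α. -/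
open MeasureTheory Set
open scoped ENNReal

section
namespace Stmt18Aux

section
attribute [local instance] Matrix.linftyOpNormedRing Matrix.linftyOpNormedAlgebra
lemma cont_aux {n : ℕ} (A : Matrix (Fin n) (Fin n) ℝ) (b : Fin n → ℝ) :
    Continuous (fun t : ℝ => ‖(NormedSpace.exp (t • A)).mulVec b‖ ^ 2) := by
  have h1 : Continuous (fun t : ℝ => NormedSpace.exp (t • A)) :=
    NormedSpace.exp_continuous.comp (continuous_id.smul continuous_const)
  have h2 : Continuous (fun M : Matrix (Fin n) (Fin n) ℝ => M.mulVec b) := by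
    refine continuous_pi fun j => ?_
    simp only [Matrix.mulVec, dotProduct]
    exact continuous_finset_sum _ fun k _ =>
      by fun_prop
  exact ((h2.comp h1).norm.pow 2)
end



lemma L1 (r : ℝ) (hr : 0 ≤ r) :
    ENNReal.ofReal r = ∫⁻ s in Set.Ioi (0:ℝ), (if s < r then 1 else 0) := by
  have h : ∀ s : ℝ, (if s < r then (1:ℝ≥0∞) else 0) = (Set.Iio r).indicator (fun _ => 1) s := by
    intro s; by_cases h : s < r <;> simp [Set.indicator, h]
  simp_rw [h]
  rw [lintegral_indicator measurableSet_Iio]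
  simp [Measure.restrict_restrict measurableSet_Iio, Set.Iio_inter_Ioi,
    Real.volume_Ioo, hr]

lemma L2a {D : Set ℝ} (hD0 : D ⊆ Set.Ioi 0)
    (hinit : ∀ s ∈ D, ∀ t, 0 < t → t < s → t ∈ D) (hfin : volume D ≠ ⊤) :
    Set.Ioo 0 ((volume D).toReal) ⊆ D := by
  intro t ht
  by_contra htD
  have hsub : D ⊆ Set.Ioc 0 t := by
    intro s hs
    refine ⟨hD0 hs, ?_⟩
    by_contra hst
    exact htD (hinit s hs t ht.1 (lt_of_not_ge hst))
  have h1 : volume D ≤ ENNReal.ofReal t := by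
    have := measure_mono (μ := volume) hsub
    simpa [Real.volume_Ioc] using this
  have h2 : (volume D).toReal ≤ t := by
    rw [← ENNReal.ofReal_toReal hfin] at h1
    exact (ENNReal.ofReal_le_ofReal_iff (le_of_lt ht.1)).mp h1
  exact absurd ht.2 (not_lt.mpr h2)

lemma L2b {D : Set ℝ} (hD0 : D ⊆ Set.Ioi 0)
    (hinit : ∀ s ∈ D, ∀ t, 0 < t → t < s → t ∈ D) (hfin : volume D ≠ ⊤)
    {t : ℝ} (ht : (volume D).toReal < t) : t ∉ D := by
  intro htD
  have hsub : Set.Ioo 0 t ⊆ D := fun u hu => hinit t htD u hu.1 hu.2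
  have h1 : ENNReal.ofReal t ≤ volume D := by
    have := measure_mono (μ := volume) hsub
    simpa [Real.volume_Ioo] using this
  rw [← ENNReal.ofReal_toReal hfin, ENNReal.ofReal_le_ofReal_iff
    ENNReal.toReal_nonneg] at h1
  exact absurd ht (not_lt.mpr h1)


lemma Lpart {T : ℝ} (hT : 0 < T) {m : ℕ} {y : ℝ} (hy : y ∈ Set.Ico (0:ℝ) (m * T)) :
    ∃ i : Fin m, y ∈ Set.Ico ((i:ℝ) * T) ((i:ℝ) * T + T) := by
  have h0 : 0 ≤ y / T := div_nonneg hy.1 hT.le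
  have hlt : y / T < m := by
    rw [div_lt_iff₀ hT]; exact hy.2
  have hnat : ⌊y / T⌋₊ < m := Nat.floor_lt h0 |>.mpr hlt
  refine ⟨⟨⌊y / T⌋₊, hnat⟩, ?_, ?_⟩
  · have := Nat.floor_le h0
    calc ((⌊y / T⌋₊ : ℝ)) * T ≤ (y / T) * T := by nlinarith
    _ = y := div_mul_cancel₀ _ hT.ne'
  · have := Nat.lt_floor_add_one (y / T)
    have h2 : y / T * T < (⌊y / T⌋₊ + 1) * T := by nlinarith
    rw [div_mul_cancel₀ _ hT.ne'] at h2
    simpa [add_mul] using h2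

end Stmt18Aux
end

open Stmt18Aux

set_option maxHeartbeats 2000000 in
theorem stmt18 {n m : ℕ} (A : Matrix (Fin n) (Fin n) ℝ) (bv : Fin m → (Fin n → ℝ))
    (hbv : ∀ i, bv i ≠ 0) (T α : ℝ) (hT : 0 < T) (hα0 : 0 < α) (hαm : α < m * T)
    (f : Fin m → ℝ → ℝ)
    (hf : ∀ (i : Fin m) (t : ℝ), f i t = ‖(NormedSpace.exp (t • A)).mulVec (bv i)‖ ^ 2)
    (F : ℝ → ℝ)
    (hF : ∀ (i : Fin m), ∀ t ∈ Set.Ico ((i : ℝ) * T) ((i : ℝ) * T + T),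
      F t = f i (t - (i : ℝ) * T))
    (hdec : StrictDecRightAt (rearr (m * T) F) α) :
    (∀ v : Fin m → ℝ → ℝ, (∀ i, Measurable (v i)) →
        (∀ (i : Fin m), ∀ t ∈ Set.Icc (0:ℝ) T, v i t ∈ Set.Icc (0:ℝ) 1) →
        (∑ i : Fin m, ∫ t in Set.Icc (0:ℝ) T, |v i t|) ≤ α →
        (∑ i : Fin m, ∫ t in Set.Icc (0:ℝ) T, (v i t) ^ 2 * f i t)
          ≤ ∫ t in Set.Icc (0:ℝ) α, rearr (m * T) F t) ∧
    (∑ i : Fin m, ∫ t in Set.Icc (0:ℝ) T,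
        (Set.indicator {t | rearr (m * T) F α ≤ f i t} (fun _ => (1:ℝ)) t) ^ 2 * f i t)
      = ∫ t in Set.Icc (0:ℝ) α, rearr (m * T) F t := by
  have hm : 0 < m := by
    rcases Nat.eq_zero_or_pos m with h | h
    · subst h; norm_num at hαm; linarith
    · exact h
  set a : ℝ := (m : ℝ) * T with ha_def
  have ha0 : 0 < a := lt_trans hα0 hαm
  -- continuity and nonnegativity of f i
  have hcont : ∀ i, Continuous (f i) := by
    intro i
    have : f i = fun t => ‖(NormedSpace.exp (t • A)).mulVec (bv i)‖ ^ 2 := funext (hf i)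
    rw [this]; exact cont_aux A (bv i)
  have hfnn : ∀ i t, 0 ≤ f i t := by
    intro i t; rw [hf]; positivity
  -- uniform bound M
  obtain ⟨M, hM0, hM⟩ : ∃ M : ℝ, 0 ≤ M ∧ ∀ i, ∀ t ∈ Set.Icc (0:ℝ) T, f i t ≤ M := by
    have h := fun i : Fin m => isCompact_Icc.exists_bound_of_continuousOn
      (s := Set.Icc (0:ℝ) T) (hcont i).continuousOn
    choose C hC using h
    have hne : (Finset.univ : Finset (Fin m)).Nonempty := by
      simpa [Finset.univ_nonempty_iff] using Fin.pos_iff_nonempty.mp hm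
    refine ⟨max 0 (Finset.univ.sup' hne C), le_max_left _ _, fun i t ht => ?_⟩
    calc f i t ≤ ‖f i t‖ := le_abs_self _
    _ ≤ C i := hC i t ht
    _ ≤ Finset.univ.sup' hne C := Finset.le_sup' C (Finset.mem_univ i)
    _ ≤ _ := le_max_right _ _
  -- piece sets
  set U : ℝ → Set ℝ := fun s => ⋃ i : Fin m,
    {y ∈ Set.Ico ((i:ℝ)*T) ((i:ℝ)*T+T) | s < f i (y - (i:ℝ)*T)} with hU_def
  set S : ℝ → Set ℝ := fun s => {y ∈ Set.Icc (0:ℝ) a | s < F y} with hS_def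
  have hUmeas : ∀ s, MeasurableSet (U s) := by
    intro s
    refine MeasurableSet.iUnion fun i => ?_
    have : {y ∈ Set.Ico ((i:ℝ)*T) ((i:ℝ)*T+T) | s < f i (y - (i:ℝ)*T)}
        = Set.Ico ((i:ℝ)*T) ((i:ℝ)*T+T) ∩ (fun y => f i (y - (i:ℝ)*T)) ⁻¹' Set.Ioi s := rfl
    rw [this]
    exact measurableSet_Ico.inter
      (((hcont i).comp (continuous_sub_right _)).measurable measurableSet_Ioi)
  have hIcoSub : ∀ i : Fin m, Set.Ico ((i:ℝ)*T) ((i:ℝ)*T+T) ⊆ Set.Ico (0:ℝ) a := by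
    intro i y hy
    have hi : ((i:ℝ)+1) ≤ (m:ℝ) := by exact_mod_cast i.2
    constructor
    · have : (0:ℝ) ≤ (i:ℝ)*T := by positivity
      linarith [hy.1]
    · have : (i:ℝ)*T + T ≤ a := by rw [ha_def]; nlinarith
      linarith [hy.2]
  have hUsub : ∀ s, U s ⊆ S s := by
    intro s y hy
    obtain ⟨i, hi⟩ := Set.mem_iUnion.mp hy
    obtain ⟨hy1, hy2⟩ := hi
    have hico := hIcoSub i hy1
    exact ⟨⟨hico.1, hico.2.le⟩, by rw [hF i y hy1]; exact hy2⟩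
  have hSUsub : ∀ s, S s ⊆ U s ∪ {a} := by
    intro s y hy
    rcases eq_or_ne y a with h | h
    · exact Or.inr h
    · left
      have hyIco : y ∈ Set.Ico (0:ℝ) a := ⟨hy.1.1, lt_of_le_of_ne hy.1.2 h⟩
      obtain ⟨i, hi⟩ := Lpart hT (by rwa [← ha_def])
      exact Set.mem_iUnion.mpr ⟨i, hi, by rw [← hF i y hi]; exact hy.2⟩
  have hSmeas : ∀ s, MeasurableSet (S s) := by
    intro s
    have hdec : S s = U s ∪ (S s ∩ {a}) := by
      apply Set.Subset.antisymm
      · intro y hy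
        rcases hSUsub s hy with h | h
        · exact Or.inl h
        · exact Or.inr ⟨hy, h⟩
      · exact Set.union_subset (hUsub s) Set.inter_subset_left
    rw [hdec]
    exact (hUmeas s).union ((Set.subsingleton_singleton.anti
      Set.inter_subset_right).measurableSet)
  have hvolS : ∀ s, volume (S s) = volume (U s) := by
    intro s
    refine le_antisymm ?_ (measure_mono (hUsub s))
    calc volume (S s) ≤ volume (U s ∪ {a}) := measure_mono (hSUsub s)
    _ ≤ volume (U s) + volume ({a} : Set ℝ) := measure_union_le _ _
    _ = volume (U s) := by simp
  have hSanti : Antitone (fun s => volume (S s)) := by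
    intro s s' hss'
    exact measure_mono fun y hy => ⟨hy.1, lt_of_le_of_lt hss' hy.2⟩
  have hSfin : ∀ s, volume (S s) ≤ ENNReal.ofReal a := by
    intro s
    calc volume (S s) ≤ volume (Set.Icc (0:ℝ) a) := measure_mono (Set.sep_subset _ _)
    _ = ENNReal.ofReal a := by rw [Real.volume_Icc]; ring_nf
  have hSfin' : ∀ s, volume (S s) ≠ ⊤ := fun s =>
    (lt_of_le_of_lt (hSfin s) ENNReal.ofReal_lt_top).ne
  have hS0 : ∀ s, M ≤ s → volume (S s) = 0 := by
    intro s hs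
    have hsub : S s ⊆ {a} := by
      intro y hy
      by_contra h
      have hyIco : y ∈ Set.Ico (0:ℝ) a := ⟨hy.1.1, lt_of_le_of_ne hy.1.2 h⟩
      obtain ⟨i, hi⟩ := Lpart hT (by rwa [← ha_def])
      have h1 : F y = f i (y - (i:ℝ)*T) := hF i y hi
      have h2 : y - (i:ℝ)*T ∈ Set.Icc (0:ℝ) T := ⟨by linarith [hi.1], by linarith [hi.2]⟩
      have := hM i _ h2
      rw [← h1] at this
      linarith [hy.2]
    simpa using le_antisymm (le_trans (measure_mono hsub) (by simp)) (zero_le)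
  have hSm : Measurable (fun s => volume (S s)) := hSanti.measurable
  -- the distribution-of-distribution sets
  set D : ℝ → Set ℝ := fun x => {t ∈ Set.Ioi (0:ℝ) | ENNReal.ofReal x ≤ volume (S t)}
    with hD_def
  have hDsub : ∀ x, D x ⊆ Set.Ioi 0 := fun x => Set.sep_subset _ _
  have hDinit : ∀ x, ∀ s ∈ D x, ∀ t, 0 < t → t < s → t ∈ D x := by
    intro x s hs t ht hts
    exact ⟨ht, le_trans hs.2 (hSanti hts.le)⟩
  have hDmeas : ∀ x, MeasurableSet (D x) := by
    intro x
    exact measurableSet_Ioi.inter (hSm measurableSet_Ici)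
  have hDfin : ∀ x, 0 < x → volume (D x) ≤ ENNReal.ofReal M := by
    intro x hx
    have hsub : D x ⊆ Set.Ioc 0 M := by
      intro t ht
      refine ⟨ht.1, ?_⟩
      by_contra h
      push_neg at h
      have h0 := hS0 t h.le
      have h2 := ht.2
      rw [h0] at h2
      simp [ENNReal.ofReal_eq_zero, not_lt.mpr hx.le] at h2
      linarith
    calc volume (D x) ≤ volume (Set.Ioc (0:ℝ) M) := measure_mono hsub
    _ = ENNReal.ofReal M := by rw [Real.volume_Ioc]; ring_nf
  have hDfin' : ∀ x, 0 < x → volume (D x) ≠ ⊤ := fun x hx =>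
    (lt_of_le_of_lt (hDfin x hx) ENNReal.ofReal_lt_top).ne
  -- pointwise formula for rearr
  have hrearr : ∀ x : ℝ, 0 < x → ENNReal.ofReal (rearr a F x) = volume (D x) := by
    intro x hx
    have hre : rearr a F x = ∫ t in Set.Ioi (0:ℝ),
        Set.indicator (Set.Icc (0:ℝ) ((volume (S t)).toReal)) (fun _ => (1:ℝ)) x := rfl
    have hEq : ∀ t ∈ Set.Ioi (0:ℝ),
        Set.indicator (Set.Icc (0:ℝ) ((volume (S t)).toReal)) (fun _ => (1:ℝ)) x
        = Set.indicator (D x) (fun _ => (1:ℝ)) t := by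
      intro t ht
      by_cases h : ENNReal.ofReal x ≤ volume (S t)
      · have h1 : x ∈ Set.Icc (0:ℝ) ((volume (S t)).toReal) :=
          ⟨hx.le, (ENNReal.ofReal_le_iff_le_toReal (hSfin' t)).mp h⟩
        have h2 : t ∈ D x := ⟨ht, h⟩
        rw [Set.indicator_of_mem h1, Set.indicator_of_mem h2]
      · have h1 : x ∉ Set.Icc (0:ℝ) ((volume (S t)).toReal) := by
          intro hmem
          exact h ((ENNReal.ofReal_le_iff_le_toReal (hSfin' t)).mpr hmem.2)
        have h2 : t ∉ D x := fun hmem => h hmem.2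
        rw [Set.indicator_of_notMem h1, Set.indicator_of_notMem h2]
    rw [hre, setIntegral_congr_fun measurableSet_Ioi hEq]
    have : ∫ t in Set.Ioi (0:ℝ), Set.indicator (D x) (fun _ => (1:ℝ)) t
        = ((volume.restrict (Set.Ioi (0:ℝ))) (D x)).toReal := by
      exact integral_indicator_one (hDmeas x)
    rw [this, Measure.restrict_apply (hDmeas x),
      Set.inter_eq_self_of_subset_left (hDsub x)]
    exact ENNReal.ofReal_toReal (hDfin' x hx)
  have hrearr_nonneg : ∀ x, 0 ≤ rearr a F x := by
    intro x
    exact integral_nonneg fun t => Set.indicator_nonneg (fun _ _ => zero_le_one) _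
  set c : ℝ := rearr a F α with hc_def
  obtain ⟨ε₀, hε₀, hsdec⟩ := hdec
  have hc0 : 0 < c := by
    have h1 := hsdec (ε₀/2) (by linarith) (by linarith)
    have h2 := hrearr_nonneg (α + ε₀/2)
    linarith
  have hvolD : volume (D α) = ENNReal.ofReal c := (hrearr α hα0).symm
  have hvolDtoReal : (volume (D α)).toReal = c := by
    rw [hvolD]; exact ENNReal.toReal_ofReal hc0.le
  have Kpre : ∀ t, 0 < t → t < c → ENNReal.ofReal α ≤ volume (S t) := by
    intro t ht htc
    have := L2a (D := D α) (hDsub α) (hDinit α) (hDfin' α hα0)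
    rw [hvolDtoReal] at this
    exact (this ⟨ht, htc⟩).2
  have K1 : ∀ s, c < s → volume (S s) ≤ ENNReal.ofReal α := by
    intro s hcs
    have hnot := L2b (D := D α) (hDsub α) (hDinit α) (hDfin' α hα0)
      (t := s) (by rwa [hvolDtoReal])
    have hs0 : 0 < s := lt_trans hc0 hcs
    by_contra h
    push_neg at h
    exact hnot ⟨hs0, h.le⟩
  -- the level set at c has measure exactly α
  set Ecal : Set ℝ := {y ∈ Set.Icc (0:ℝ) a | c ≤ F y} with hE_def
  have hEmeasle : ∀ t, t < c → Ecal ⊆ S t := by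
    intro t htc y hy
    exact ⟨hy.1, lt_of_lt_of_le htc hy.2⟩
  have hEeq : Ecal = ⋂ n : ℕ, S (c - c/(n+2)) := by
    ext y
    constructor
    · intro hy
      refine Set.mem_iInter.mpr fun n => ⟨hy.1, ?_⟩
      have h1 : 0 < c/((n:ℝ)+2) := by positivity
      have := hy.2
      linarith
    · intro hy
      have h1 := Set.mem_iInter.mp hy 0
      refine ⟨h1.1, ?_⟩
      by_contra h
      push_neg at h
      obtain ⟨k, hk⟩ := exists_nat_gt (c / (c - F y))
      have hpos : 0 < c - F y := by linarith
      have h2 : c / (c - F y) < (k:ℝ) + 2 := by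
        have : (k:ℝ) ≤ (k:ℝ) + 2 := by linarith
        linarith
      have h3 : c < ((k:ℝ)+2) * (c - F y) := by
        rw [div_lt_iff₀ hpos] at h2
        linarith
      have h4 : c/((k:ℝ)+2) < c - F y := by
        rw [div_lt_iff₀ (by positivity : (0:ℝ) < (k:ℝ)+2)]
        linarith
      have h5 := (Set.mem_iInter.mp hy k).2
      linarith
  have hEmeas : MeasurableSet Ecal := by
    rw [hEeq]; exact MeasurableSet.iInter fun n => hSmeas _
  have hEvol : volume Ecal = ENNReal.ofReal α := by
    refine le_antisymm ?_ ?_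
    · -- K3 : ≤ α, via strict decrease
      by_contra h
      push_neg at h
      have hEfin : volume Ecal ≠ ⊤ := by
        refine (lt_of_le_of_lt (le_trans (measure_mono ?_) (hSfin (c/2))) ENNReal.ofReal_lt_top).ne
        exact hEmeasle _ (by linarith)
      set β : ℝ := (volume Ecal).toReal with hβ_def
      have hβα : α < β := by
        have := ENNReal.toReal_lt_toReal ENNReal.ofReal_ne_top hEfin |>.mpr h
        rwa [ENNReal.toReal_ofReal hα0.le] at this
      set ε : ℝ := min (ε₀/2) ((β - α)/2) with hε_def
      have hε : 0 < ε := lt_min (by linarith) (by linarith)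
      have hεlt : ε < ε₀ := lt_of_le_of_lt (min_le_left _ _) (by linarith)
      have hαε : α + ε < β := by
        have := min_le_right (ε₀/2) ((β - α)/2)
        have h2 : ε ≤ (β - α)/2 := this
        linarith
      have hsub : Set.Ioo 0 c ⊆ D (α + ε) := by
        intro t ht
        refine ⟨ht.1, ?_⟩
        calc ENNReal.ofReal (α + ε) ≤ ENNReal.ofReal β := ENNReal.ofReal_le_ofReal hαε.le
        _ = volume Ecal := ENNReal.ofReal_toReal hEfin
        _ ≤ volume (S t) := measure_mono (hEmeasle t ht.2)
      have h6 : ENNReal.ofReal c ≤ volume (D (α + ε)) := by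
        calc ENNReal.ofReal c = volume (Set.Ioo 0 c) := by rw [Real.volume_Ioo]; ring_nf
        _ ≤ volume (D (α + ε)) := measure_mono hsub
      rw [← hrearr (α + ε) (by linarith)] at h6
      have h7 : c ≤ rearr a F (α + ε) :=
        (ENNReal.ofReal_le_ofReal_iff (hrearr_nonneg _)).mp h6
      have h8 := hsdec ε hε hεlt
      rw [← hc_def] at h8
      linarith
    · -- K2 : ≥ α, via continuity from above
      rw [hEeq]
      have hanti : Antitone (fun n : ℕ => S (c - c/(n+2))) := by
        intro n n' hnn'
        have h1 : c - c/((n:ℝ)+2) ≤ c - c/((n':ℝ)+2) := by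
          have h2 : c/((n':ℝ)+2) ≤ c/((n:ℝ)+2) := by
            apply div_le_div_of_nonneg_left hc0.le (by positivity)
            have : (n:ℝ) ≤ (n':ℝ) := by exact_mod_cast hnn'
            linarith
          linarith
        intro y hy
        exact ⟨hy.1, lt_of_le_of_lt h1 hy.2⟩
      rw [hanti.measure_iInter (fun n => (hSmeas _).nullMeasurableSet) ⟨0, hSfin' _⟩]
      refine le_iInf fun n => ?_
      have h1 : 0 < c/((n:ℝ)+2) := by positivity
      have h2 : c/((n:ℝ)+2) < c := by
        rw [div_lt_iff₀ (by positivity : (0:ℝ) < (n:ℝ)+2)]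
        nlinarith
      exact Kpre _ (by linarith) (by linarith)
  -- the target quantity I
  set I : ℝ≥0∞ := ∫⁻ s in Set.Ioi (0:ℝ), min (ENNReal.ofReal α) (volume (S s)) with hI_def
  have hIfin : I ≠ ⊤ := by
    have hle : I ≤ ENNReal.ofReal α * volume (Set.Ioc (0:ℝ) M) := by
      have h1 : I ≤ ∫⁻ s in Set.Ioi (0:ℝ),
          (Set.Ioc (0:ℝ) M).indicator (fun _ => ENNReal.ofReal α) s := by
        refine setLIntegral_mono' measurableSet_Ioi fun s hs => ?_
        by_cases h : s ∈ Set.Ioc (0:ℝ) M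
        · rw [Set.indicator_of_mem h]; exact min_le_left _ _
        · have hMs : M ≤ s := by
            by_contra hc; push_neg at hc
            exact h ⟨hs, hc.le⟩
          rw [Set.indicator_of_notMem h]
          calc min (ENNReal.ofReal α) (volume (S s)) ≤ volume (S s) := min_le_right _ _
          _ = 0 := hS0 s hMs
      rw [lintegral_indicator measurableSet_Ioc] at h1
      calc I ≤ _ := h1
      _ = ENNReal.ofReal α * (volume.restrict (Set.Ioi (0:ℝ)) (Set.Ioc (0:ℝ) M)) := by
        rw [setLIntegral_const]
      _ ≤ ENNReal.ofReal α * volume (Set.Ioc (0:ℝ) M) := by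
        gcongr
        exact Measure.restrict_le_self
    refine (lt_of_le_of_lt hle ?_).ne
    rw [Real.volume_Ioc]
    exact ENNReal.mul_lt_top ENNReal.ofReal_lt_top ENNReal.ofReal_lt_top
  -- inner bathtub computation
  have hmin : ∀ t : ℝ, (∫⁻ x in Set.Ioc (0:ℝ) α,
      (if ENNReal.ofReal x ≤ volume (S t) then (1:ℝ≥0∞) else 0))
      = min (ENNReal.ofReal α) (volume (S t)) := by
    intro t
    by_cases h : ENNReal.ofReal α ≤ volume (S t)
    · have heq : ∀ x ∈ Set.Ioc (0:ℝ) α,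
          (if ENNReal.ofReal x ≤ volume (S t) then (1:ℝ≥0∞) else 0) = 1 := by
        intro x hx
        exact if_pos (le_trans (ENNReal.ofReal_le_ofReal hx.2) h)
      rw [setLIntegral_congr_fun measurableSet_Ioc heq]
      simp [Real.volume_Ioc, min_eq_left h]
    · push_neg at h
      set v : ℝ := (volume (S t)).toReal with hv_def
      have hvV : ENNReal.ofReal v = volume (S t) := ENNReal.ofReal_toReal (hSfin' t)
      have hvα : v < α := by
        have := (ENNReal.toReal_lt_toReal (hSfin' t) ENNReal.ofReal_ne_top).mpr h
        rwa [ENNReal.toReal_ofReal hα0.le, ← hv_def] at this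
      have heq : ∀ x ∈ Set.Ioc (0:ℝ) α,
          (if ENNReal.ofReal x ≤ volume (S t) then (1:ℝ≥0∞) else 0)
          = (Set.Iic v).indicator (fun _ => (1:ℝ≥0∞)) x := by
        intro x hx
        by_cases hxv : x ≤ v
        · rw [if_pos (by rw [← hvV]; exact ENNReal.ofReal_le_ofReal hxv),
            Set.indicator_of_mem (Set.mem_Iic.mpr hxv)]
        · push_neg at hxv
          have hnot : x ∉ Set.Iic v := fun hcon => absurd hcon hxv.not_ge
          have hcond : ¬ (ENNReal.ofReal x ≤ volume (S t)) := by
            rw [← hvV]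
            intro hcon
            have := (ENNReal.ofReal_le_ofReal_iff ENNReal.toReal_nonneg).mp hcon
            linarith
          rw [if_neg hcond, Set.indicator_of_notMem hnot]
      rw [setLIntegral_congr_fun measurableSet_Ioc heq,
        lintegral_indicator measurableSet_Iic, Measure.restrict_restrict measurableSet_Iic]
      have hset : Set.Iic v ∩ Set.Ioc 0 α = Set.Ioc 0 v := by
        ext x
        constructor
        · rintro ⟨h1, h2, h3⟩; exact ⟨h2, h1⟩
        · rintro ⟨h1, h2⟩; exact ⟨h2, h1, by linarith⟩
      rw [hset]
      simp only [lintegral_const, Measure.restrict_apply MeasurableSet.univ,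
        Set.univ_inter, one_mul, Real.volume_Ioc]
      rw [min_eq_right h.le, sub_zero, hvV]
  -- joint measurability
  have hjoint : Measurable (Function.uncurry fun x t =>
      (if ENNReal.ofReal x ≤ volume (S t) then (1:ℝ≥0∞) else 0)) := by
    have hset : MeasurableSet {p : ℝ × ℝ | ENNReal.ofReal p.1 ≤ volume (S p.2)} := by
      refine measurableSet_le ?_ ?_
      · exact ENNReal.measurable_ofReal.comp measurable_fst
      · exact hSm.comp measurable_snd
    exact Measurable.ite hset measurable_const measurable_const
  -- rearr as an inner integral
  have hDvol : ∀ x : ℝ, volume (D x) = ∫⁻ t in Set.Ioi (0:ℝ),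
      (if ENNReal.ofReal x ≤ volume (S t) then (1:ℝ≥0∞) else 0) := by
    intro x
    have hms : MeasurableSet {t : ℝ | ENNReal.ofReal x ≤ volume (S t)} :=
      hSm measurableSet_Ici
    have heq : ∀ t : ℝ, (if ENNReal.ofReal x ≤ volume (S t) then (1:ℝ≥0∞) else 0)
        = ({t : ℝ | ENNReal.ofReal x ≤ volume (S t)}).indicator (fun _ => (1:ℝ≥0∞)) t := by
      intro t
      by_cases h : ENNReal.ofReal x ≤ volume (S t)
      · rw [if_pos h, Set.indicator_of_mem (by exact h)]
      · rw [if_neg h, Set.indicator_of_notMem (by exact h)]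
    simp_rw [heq]
    rw [lintegral_indicator hms]
    rw [Measure.restrict_restrict hms, lintegral_one,
      Measure.restrict_apply MeasurableSet.univ, Set.univ_inter]
    congr 1
    ext t
    exact ⟨fun ht => ⟨ht.2, ht.1⟩, fun ht => ⟨ht.2, ht.1⟩⟩
  -- the key identity for the RHS
  have hR : (∫⁻ x in Set.Icc (0:ℝ) α, ENNReal.ofReal (rearr a F x)) = I := by
    have h1 : volume.restrict (Set.Icc (0:ℝ) α) = volume.restrict (Set.Ioc (0:ℝ) α) :=
      (Measure.restrict_congr_set Ioc_ae_eq_Icc).symm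
    rw [h1]
    have h2 : ∀ x ∈ Set.Ioc (0:ℝ) α, ENNReal.ofReal (rearr a F x)
        = ∫⁻ t in Set.Ioi (0:ℝ), (if ENNReal.ofReal x ≤ volume (S t) then (1:ℝ≥0∞) else 0) := by
      intro x hx
      rw [hrearr x hx.1, hDvol x]
    rw [setLIntegral_congr_fun measurableSet_Ioc h2]
    rw [lintegral_lintegral_swap hjoint.aemeasurable]
    exact lintegral_congr fun t => hmin t
  -- Bochner conversion for the RHS
  have hg'anti : Antitone (fun x : ℝ =>
      (volume {t ∈ Set.Ioc (0:ℝ) M | ENNReal.ofReal x ≤ volume (S t)}).toReal) := by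
    intro x x' hxx'
    have hsub : {t ∈ Set.Ioc (0:ℝ) M | ENNReal.ofReal x' ≤ volume (S t)}
        ⊆ {t ∈ Set.Ioc (0:ℝ) M | ENNReal.ofReal x ≤ volume (S t)} := by
      intro t ht
      exact ⟨ht.1, le_trans (ENNReal.ofReal_le_ofReal hxx') ht.2⟩
    refine ENNReal.toReal_mono ?_ (measure_mono hsub)
    refine (lt_of_le_of_lt (measure_mono (Set.sep_subset _ _)) ?_).ne
    rw [Real.volume_Ioc]
    exact ENNReal.ofReal_lt_top
  have hg'eq : ∀ x : ℝ, 0 < x → rearr a F x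
      = (volume {t ∈ Set.Ioc (0:ℝ) M | ENNReal.ofReal x ≤ volume (S t)}).toReal := by
    intro x hx
    have h1 : rearr a F x = (volume (D x)).toReal := by
      have := hrearr x hx
      have h2 := congrArg ENNReal.toReal this
      rwa [ENNReal.toReal_ofReal (hrearr_nonneg x)] at h2
    rw [h1]
    congr 2
    ext t
    constructor
    · intro ht
      refine ⟨⟨ht.1, ?_⟩, ht.2⟩
      by_contra h
      push_neg at h
      have h0 := hS0 t h.le
      have h2 := ht.2
      rw [h0] at h2
      simp [ENNReal.ofReal_eq_zero, not_lt.mpr hx.le] at h2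
      linarith
    · intro ht
      exact ⟨ht.1.1, ht.2⟩
  have hRSM : AEStronglyMeasurable (rearr a F) (volume.restrict (Set.Icc (0:ℝ) α)) := by
    refine AEStronglyMeasurable.congr
      ((hg'anti.measurable).aestronglyMeasurable) ?_
    have h0 : ∀ᵐ x ∂volume.restrict (Set.Icc (0:ℝ) α), x ≠ 0 := by
      refine ae_restrict_of_ae ?_
      rw [ae_iff]
      have : {x : ℝ | ¬ x ≠ 0} = {0} := by ext x; simp
      rw [this]
      exact measure_singleton 0
    filter_upwards [ae_restrict_mem measurableSet_Icc, h0] with x hx hx0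
    exact (hg'eq x (lt_of_le_of_ne hx.1 (Ne.symm hx0))).symm
  have hRconv : (∫ x in Set.Icc (0:ℝ) α, rearr a F x) = I.toReal := by
    rw [integral_eq_lintegral_of_nonneg_ae
      (Filter.Eventually.of_forall hrearr_nonneg) hRSM, hR]
  -- helpers for summing piecewise volumes
  have hfm : ∀ i, Measurable (f i) := fun i => (hcont i).measurable
  have hIccIco : ∀ (G : Set ℝ), volume (G ∩ Set.Icc (0:ℝ) T) = volume (G ∩ Set.Ico (0:ℝ) T) := by
    intro G
    refine le_antisymm ?_
      (measure_mono (Set.inter_subset_inter_right G Set.Ico_subset_Icc_self))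
    have hsub : G ∩ Set.Icc (0:ℝ) T ⊆ (G ∩ Set.Ico (0:ℝ) T) ∪ {T} := by
      intro y hy
      rcases eq_or_ne y T with h | h
      · exact Or.inr h
      · exact Or.inl ⟨hy.1, hy.2.1, lt_of_le_of_ne hy.2.2 h⟩
    calc volume (G ∩ Set.Icc (0:ℝ) T) ≤ volume ((G ∩ Set.Ico (0:ℝ) T) ∪ {T}) :=
        measure_mono hsub
    _ ≤ volume (G ∩ Set.Ico (0:ℝ) T) + volume ({T} : Set ℝ) := measure_union_le _ _
    _ = volume (G ∩ Set.Ico (0:ℝ) T) := by simp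
  have hpieceEq : ∀ (i : Fin m) (P : ℝ → Prop),
      {y ∈ Set.Ico ((i:ℝ)*T) ((i:ℝ)*T+T) | P (f i (y - (i:ℝ)*T))}
      = (fun y => y - (i:ℝ)*T) ⁻¹' ({t | P (f i t)} ∩ Set.Ico (0:ℝ) T) := by
    intro i P
    ext y
    simp only [Set.mem_setOf_eq, Set.mem_preimage, Set.mem_inter_iff, Set.mem_Ico]
    constructor
    · rintro ⟨⟨h1, h2⟩, h3⟩
      exact ⟨h3, by linarith, by linarith⟩
    · rintro ⟨h1, h2, h3⟩
      exact ⟨⟨by linarith, by linarith⟩, h1⟩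
  have hvol_piece : ∀ (i : Fin m) (P : ℝ → Prop), MeasurableSet {t | P (f i t)} →
      volume {y ∈ Set.Ico ((i:ℝ)*T) ((i:ℝ)*T+T) | P (f i (y - (i:ℝ)*T))}
      = volume ({t | P (f i t)} ∩ Set.Icc (0:ℝ) T) := by
    intro i P hP
    rw [hpieceEq i P,
      (measurePreserving_sub_right volume ((i:ℝ)*T)).measure_preimage
        ((hP.inter measurableSet_Ico).nullMeasurableSet), hIccIco]
  have hsum_pieces : ∀ (P : Fin m → Set ℝ), (∀ i, MeasurableSet (P i)) →
      (∀ i, P i ⊆ Set.Ico ((i:ℝ)*T) ((i:ℝ)*T+T)) →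
      (∑ i : Fin m, volume (P i)) = volume (⋃ i, P i) := by
    intro P hPm hPsub
    have hdisj : Pairwise (Function.onFun Disjoint P) := by
      intro i j hij
      refine Set.disjoint_left.mpr fun y hyi hyj => ?_
      have key : ∀ (i' j' : Fin m), i' < j' →
          y ∈ Set.Ico ((i':ℝ)*T) ((i':ℝ)*T+T) → y ∈ Set.Ico ((j':ℝ)*T) ((j':ℝ)*T+T) → False := by
        intro i' j' hlt h1 h2
        have : ((i':ℝ)+1) ≤ (j':ℝ) := by exact_mod_cast hlt
        have h3 : (i':ℝ)*T + T ≤ (j':ℝ)*T := by nlinarith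
        have := h1.2
        have := h2.1
        linarith
      rcases lt_or_gt_of_ne hij with h | h
      · exact key i j h (hPsub i hyi) (hPsub j hyj)
      · exact key j i h (hPsub j hyj) (hPsub i hyi)
    rw [measure_iUnion hdisj hPm, tsum_fintype]
  refine ⟨?_, ?_⟩
  · -- Part 1 : the upper bound
    intro v hvm hvbox hvbud
    set L : Fin m → ℝ≥0∞ := fun i => ∫⁻ t in Set.Icc (0:ℝ) T,
      ENNReal.ofReal ((v i t)^2 * f i t) with hL_def
    have hLconv : ∀ i, (∫ t in Set.Icc (0:ℝ) T, (v i t)^2 * f i t) = (L i).toReal := by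
      intro i
      rw [hL_def, integral_eq_lintegral_of_nonneg_ae
        (Filter.Eventually.of_forall fun t => mul_nonneg (sq_nonneg _) (hfnn i t))
        ((((hvm i).pow_const 2).mul (hfm i)).aestronglyMeasurable)]
    have hLfin : ∀ i, L i ≠ ⊤ := by
      intro i
      have hb : L i ≤ ∫⁻ _t in Set.Icc (0:ℝ) T, ENNReal.ofReal M := by
        refine setLIntegral_mono' measurableSet_Icc fun t ht => ?_
        refine ENNReal.ofReal_le_ofReal ?_
        have hv := hvbox i t ht
        have hfM := hM i t ht
        have h2 : (v i t)^2 ≤ 1 := by nlinarith [hv.1, hv.2]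
        have h3 := mul_le_mul_of_nonneg_right h2 (hfnn i t)
        rw [one_mul] at h3
        linarith
      refine (lt_of_le_of_lt hb ?_).ne
      rw [setLIntegral_const]
      exact ENNReal.mul_lt_top ENNReal.ofReal_lt_top
        (by rw [Real.volume_Icc]; exact ENNReal.ofReal_lt_top)
    set J : Fin m → ℝ → ℝ≥0∞ := fun i s => ∫⁻ t in Set.Icc (0:ℝ) T,
        ENNReal.ofReal (v i t) * (if s < f i t then 1 else 0) with hJ_def
    have hJm : ∀ i, Measurable (J i) := by
      intro i
      apply Measurable.lintegral_prod_right
        (f := fun s t => ENNReal.ofReal (v i t) * (if s < f i t then 1 else 0))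
      have hset : MeasurableSet {p : ℝ × ℝ | p.1 < f i p.2} :=
        measurableSet_lt measurable_fst ((hfm i).comp measurable_snd)
      exact (ENNReal.measurable_ofReal.comp ((hvm i).comp measurable_snd)).mul
        (Measurable.ite hset measurable_const measurable_const)
    have hLJ : ∀ i, L i ≤ ∫⁻ s in Set.Ioi (0:ℝ), J i s := by
      intro i
      have ha' : L i ≤ ∫⁻ t in Set.Icc (0:ℝ) T,
          ENNReal.ofReal (v i t) * ENNReal.ofReal (f i t) := by
        refine setLIntegral_mono' measurableSet_Icc fun t ht => ?_
        have hv := hvbox i t ht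
        have h1 : (v i t)^2 * f i t ≤ v i t * f i t := by
          nlinarith [mul_nonneg (mul_nonneg hv.1 (sub_nonneg.mpr hv.2)) (hfnn i t)]
        calc ENNReal.ofReal ((v i t)^2 * f i t) ≤ ENNReal.ofReal (v i t * f i t) :=
            ENNReal.ofReal_le_ofReal h1
        _ = ENNReal.ofReal (v i t) * ENNReal.ofReal (f i t) := ENNReal.ofReal_mul hv.1
      have hb' : (∫⁻ t in Set.Icc (0:ℝ) T, ENNReal.ofReal (v i t) * ENNReal.ofReal (f i t))
          = ∫⁻ s in Set.Ioi (0:ℝ), J i s := by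
        have h1 : ∀ t, ENNReal.ofReal (v i t) * ENNReal.ofReal (f i t)
            = ∫⁻ s in Set.Ioi (0:ℝ), ENNReal.ofReal (v i t) * (if s < f i t then 1 else 0) := by
          intro t
          rw [L1 (f i t) (hfnn i t)]
          exact (lintegral_const_mul' _ _ ENNReal.ofReal_ne_top).symm
        rw [lintegral_congr h1]
        have hset : MeasurableSet {p : ℝ × ℝ | p.2 < f i p.1} :=
          measurableSet_lt measurable_snd ((hfm i).comp measurable_fst)
        exact lintegral_lintegral_swap
          (((ENNReal.measurable_ofReal.comp ((hvm i).comp measurable_fst)).mul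
            (Measurable.ite hset measurable_const measurable_const)).aemeasurable)
      exact le_trans ha' (le_of_eq hb')
    have hbud : ∀ s : ℝ, (∑ i : Fin m, J i s) ≤ ENNReal.ofReal α := by
      intro s
      have h1 : ∀ i, J i s ≤ ENNReal.ofReal (∫ t in Set.Icc (0:ℝ) T, |v i t|) := by
        intro i
        have hint : IntegrableOn (fun t => |v i t|) (Set.Icc (0:ℝ) T) := by
          refine Integrable.mono' (g := fun _ => (1:ℝ))
            ((integrableOn_const_iff (by finiteness)).mpr (Or.inr ?_)) ((hvm i).abs.aestronglyMeasurable) ?_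
          · rw [Real.volume_Icc]; exact ENNReal.ofReal_lt_top
          · filter_upwards [ae_restrict_mem measurableSet_Icc] with t ht
            rw [Real.norm_eq_abs, abs_abs]
            exact abs_le.mpr ⟨by linarith [(hvbox i t ht).1], (hvbox i t ht).2⟩
        rw [ofReal_integral_eq_lintegral_ofReal hint
          (Filter.Eventually.of_forall fun t => abs_nonneg _)]
        calc J i s ≤ ∫⁻ t in Set.Icc (0:ℝ) T, ENNReal.ofReal (v i t) := by
              refine setLIntegral_mono' measurableSet_Icc fun t _ht => ?_
              by_cases h : s < f i t
              · simp [h]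
              · simp [h]
        _ = ∫⁻ t in Set.Icc (0:ℝ) T, ENNReal.ofReal (|v i t|) := by
              refine setLIntegral_congr_fun measurableSet_Icc
                (fun t ht => ?_)
              rw [abs_of_nonneg (hvbox i t ht).1]
      calc (∑ i : Fin m, J i s) ≤ ∑ i : Fin m, ENNReal.ofReal (∫ t in Set.Icc (0:ℝ) T, |v i t|) :=
          Finset.sum_le_sum fun i _ => h1 i
      _ = ENNReal.ofReal (∑ i : Fin m, ∫ t in Set.Icc (0:ℝ) T, |v i t|) :=
          (ENNReal.ofReal_sum_of_nonneg fun i _ => integral_nonneg fun t => abs_nonneg _).symm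
      _ ≤ ENNReal.ofReal α := ENNReal.ofReal_le_ofReal hvbud
    have hvolb : ∀ s : ℝ, (∑ i : Fin m, J i s) ≤ volume (S s) := by
      intro s
      have h1 : ∀ i, J i s
          ≤ volume {y ∈ Set.Ico ((i:ℝ)*T) ((i:ℝ)*T+T) | s < f i (y - (i:ℝ)*T)} := by
        intro i
        have hms : MeasurableSet {t : ℝ | s < f i t} := measurableSet_lt measurable_const (hfm i)
        rw [hvol_piece i (fun r => s < r) hms]
        calc J i s ≤ ∫⁻ t in Set.Icc (0:ℝ) T,
              ({t : ℝ | s < f i t}).indicator (fun _ => (1:ℝ≥0∞)) t := by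
              refine setLIntegral_mono' measurableSet_Icc fun t ht => ?_
              by_cases h : s < f i t
              · rw [Set.indicator_of_mem (by exact h), if_pos h, mul_one]
                exact ENNReal.ofReal_le_one.mpr (hvbox i t ht).2
              · rw [Set.indicator_of_notMem (by exact h), if_neg h, mul_zero]
        _ = volume ({t : ℝ | s < f i t} ∩ Set.Icc (0:ℝ) T) := by
              rw [lintegral_indicator hms, Measure.restrict_restrict hms, lintegral_one,
                Measure.restrict_apply MeasurableSet.univ, Set.univ_inter]
      calc (∑ i : Fin m, J i s)
          ≤ ∑ i : Fin m, volume {y ∈ Set.Ico ((i:ℝ)*T) ((i:ℝ)*T+T) | s < f i (y - (i:ℝ)*T)} :=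
          Finset.sum_le_sum fun i _ => h1 i
      _ = volume (U s) := by
            rw [hsum_pieces _ ?_ (fun i => Set.sep_subset _ _)]
            intro i
            have : {y ∈ Set.Ico ((i:ℝ)*T) ((i:ℝ)*T+T) | s < f i (y - (i:ℝ)*T)}
                = Set.Ico ((i:ℝ)*T) ((i:ℝ)*T+T) ∩ (fun y => f i (y - (i:ℝ)*T)) ⁻¹' Set.Ioi s := rfl
            rw [this]
            exact measurableSet_Ico.inter
              (((hcont i).comp (continuous_sub_right _)).measurable measurableSet_Ioi)
      _ = volume (S s) := (hvolS s).symm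
    have hkey : (∑ i : Fin m, L i) ≤ I := by
      calc (∑ i : Fin m, L i) ≤ ∑ i : Fin m, ∫⁻ s in Set.Ioi (0:ℝ), J i s :=
          Finset.sum_le_sum fun i _ => hLJ i
      _ = ∫⁻ s in Set.Ioi (0:ℝ), ∑ i : Fin m, J i s :=
          (lintegral_finset_sum' _ fun i _ => (hJm i).aemeasurable).symm
      _ ≤ I := setLIntegral_mono' measurableSet_Ioi fun s _hs => le_min (hbud s) (hvolb s)
    calc (∑ i : Fin m, ∫ t in Set.Icc (0:ℝ) T, (v i t)^2 * f i t)
        = ∑ i : Fin m, (L i).toReal := Finset.sum_congr rfl fun i _ => hLconv i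
    _ = (∑ i : Fin m, L i).toReal := (ENNReal.toReal_sum fun i _ => hLfin i).symm
    _ ≤ I.toReal := ENNReal.toReal_mono hIfin hkey
    _ = ∫ x in Set.Icc (0:ℝ) α, rearr a F x := hRconv.symm
  · -- Part 2 : the binary choice achieves the bound
    have hindm : ∀ i, MeasurableSet {t : ℝ | c ≤ f i t} :=
      fun i => measurableSet_le measurable_const (hfm i)
    set Q : Fin m → ℝ → Set ℝ := fun i s =>
      {y ∈ Set.Ico ((i:ℝ)*T) ((i:ℝ)*T+T) | c ≤ f i (y - (i:ℝ)*T) ∧ s < f i (y - (i:ℝ)*T)}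
      with hQ_def
    have hQm : ∀ i s, MeasurableSet (Q i s) := by
      intro i s
      have : Q i s = Set.Ico ((i:ℝ)*T) ((i:ℝ)*T+T)
          ∩ (fun y => f i (y - (i:ℝ)*T)) ⁻¹' (Set.Ici c ∩ Set.Ioi s) := by
        ext y
        constructor
        · rintro ⟨h1, h2, h3⟩; exact ⟨h1, h2, h3⟩
        · rintro ⟨h1, h2, h3⟩; exact ⟨h1, h2, h3⟩
      rw [this]
      exact measurableSet_Ico.inter
        (((hcont i).comp (continuous_sub_right _)).measurable
          (measurableSet_Ici.inter measurableSet_Ioi))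
    set L' : Fin m → ℝ≥0∞ := fun i => ∫⁻ t in Set.Icc (0:ℝ) T,
        (if c ≤ f i t then 1 else 0) * ENNReal.ofReal (f i t) with hL'_def
    have hconv' : ∀ i, (∫ t in Set.Icc (0:ℝ) T,
        (Set.indicator {t | c ≤ f i t} (fun _ => (1:ℝ)) t)^2 * f i t) = (L' i).toReal := by
      intro i
      rw [integral_eq_lintegral_of_nonneg_ae
        (Filter.Eventually.of_forall fun t => mul_nonneg (sq_nonneg _) (hfnn i t))
        (((((measurable_const (a := (1:ℝ))).indicator (hindm i)).pow_const 2).mul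
          (hfm i)).aestronglyMeasurable)]
      congr 1
      refine lintegral_congr fun t => ?_
      by_cases h : c ≤ f i t
      · rw [Set.indicator_of_mem (by exact h), if_pos h]
        norm_num
      · rw [Set.indicator_of_notMem (by exact h), if_neg h]
        norm_num
    have hL'fin : ∀ i, L' i ≠ ⊤ := by
      intro i
      have hb : L' i ≤ ∫⁻ _t in Set.Icc (0:ℝ) T, ENNReal.ofReal M := by
        refine setLIntegral_mono' measurableSet_Icc fun t ht => ?_
        by_cases h : c ≤ f i t
        · rw [if_pos h, one_mul]
          exact ENNReal.ofReal_le_ofReal (hM i t ht)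
        · rw [if_neg h, zero_mul]
          exact zero_le
      refine (lt_of_le_of_lt hb ?_).ne
      rw [setLIntegral_const]
      exact ENNReal.mul_lt_top ENNReal.ofReal_lt_top
        (by rw [Real.volume_Icc]; exact ENNReal.ofReal_lt_top)
    have hL'eq : ∀ i, L' i = ∫⁻ s in Set.Ioi (0:ℝ), volume (Q i s) := by
      intro i
      have h1 : ∀ t, (if c ≤ f i t then (1:ℝ≥0∞) else 0) * ENNReal.ofReal (f i t)
          = ∫⁻ s in Set.Ioi (0:ℝ),
            (if c ≤ f i t then (1:ℝ≥0∞) else 0) * (if s < f i t then 1 else 0) := by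
        intro t
        rw [L1 (f i t) (hfnn i t)]
        refine (lintegral_const_mul' _ _ ?_).symm
        by_cases h : c ≤ f i t
        · simp [h]
        · simp [h]
      calc L' i = ∫⁻ t in Set.Icc (0:ℝ) T, ∫⁻ s in Set.Ioi (0:ℝ),
            (if c ≤ f i t then (1:ℝ≥0∞) else 0) * (if s < f i t then 1 else 0) :=
          lintegral_congr h1
      _ = ∫⁻ s in Set.Ioi (0:ℝ), ∫⁻ t in Set.Icc (0:ℝ) T,
            (if c ≤ f i t then (1:ℝ≥0∞) else 0) * (if s < f i t then 1 else 0) := by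
          have hset1 : MeasurableSet {p : ℝ × ℝ | c ≤ f i p.1} :=
            measurableSet_le measurable_const ((hfm i).comp measurable_fst)
          have hset2 : MeasurableSet {p : ℝ × ℝ | p.2 < f i p.1} :=
            measurableSet_lt measurable_snd ((hfm i).comp measurable_fst)
          exact lintegral_lintegral_swap
            (((Measurable.ite hset1 measurable_const measurable_const).mul
              (Measurable.ite hset2 measurable_const measurable_const)).aemeasurable)
      _ = ∫⁻ s in Set.Ioi (0:ℝ), volume (Q i s) := by
          refine lintegral_congr fun s => ?_
          have hms : MeasurableSet {t : ℝ | c ≤ f i t ∧ s < f i t} :=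
            (hindm i).inter (measurableSet_lt measurable_const (hfm i))
          have h2 : ∀ t, (if c ≤ f i t then (1:ℝ≥0∞) else 0) * (if s < f i t then 1 else 0)
              = ({t : ℝ | c ≤ f i t ∧ s < f i t}).indicator (fun _ => (1:ℝ≥0∞)) t := by
            intro t
            by_cases h3 : c ≤ f i t <;> by_cases h4 : s < f i t <;>
              simp [Set.indicator, h3, h4]
          rw [lintegral_congr h2, lintegral_indicator hms, Measure.restrict_restrict hms,
            lintegral_one, Measure.restrict_apply MeasurableSet.univ, Set.univ_inter]
          exact (hvol_piece i (fun r => c ≤ r ∧ s < r) hms).symm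
    set W : ℝ → Set ℝ := fun s => ⋃ i : Fin m, Q i s with hW_def
    have hsumW : ∀ s, (∑ i : Fin m, volume (Q i s)) = volume (W s) := by
      intro s
      exact hsum_pieces _ (fun i => hQm i s) (fun i => Set.sep_subset _ _)
    have hae : ∀ s, 0 < s → s ≠ c →
        volume (W s) = min (ENNReal.ofReal α) (volume (S s)) := by
      intro s hs hsc
      rcases lt_or_gt_of_ne hsc with hlt | hgt
      · -- s < c : W s is the set where F ≥ c
        have hW1 : W s = {y ∈ Set.Ico (0:ℝ) a | c ≤ F y} := by
          ext y
          constructor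
          · intro hy
            obtain ⟨i, hi⟩ := Set.mem_iUnion.mp hy
            exact ⟨hIcoSub i hi.1, by rw [hF i y hi.1]; exact hi.2.1⟩
          · intro hy
            obtain ⟨i, hi⟩ := Lpart hT hy.1
            refine Set.mem_iUnion.mpr ⟨i, hi, ?_, ?_⟩
            · rw [← hF i y hi]; exact hy.2
            · rw [← hF i y hi]; linarith [hy.2]
        have hvolW : volume (W s) = ENNReal.ofReal α := by
          rw [hW1, ← hEvol]
          refine le_antisymm (measure_mono fun y hy => ⟨⟨hy.1.1, hy.1.2.le⟩, hy.2⟩) ?_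
          have hsub2 : Ecal ⊆ {y ∈ Set.Ico (0:ℝ) a | c ≤ F y} ∪ {a} := by
            intro y hy
            rcases eq_or_ne y a with h | h
            · exact Or.inr h
            · exact Or.inl ⟨⟨hy.1.1, lt_of_le_of_ne hy.1.2 h⟩, hy.2⟩
          calc volume Ecal ≤ volume ({y ∈ Set.Ico (0:ℝ) a | c ≤ F y} ∪ {a}) :=
              measure_mono hsub2
          _ ≤ volume {y ∈ Set.Ico (0:ℝ) a | c ≤ F y} + volume ({a} : Set ℝ) :=
              measure_union_le _ _
          _ = volume {y ∈ Set.Ico (0:ℝ) a | c ≤ F y} := by simp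
        rw [hvolW, min_eq_left]
        calc ENNReal.ofReal α = volume Ecal := hEvol.symm
        _ ≤ volume (S s) := measure_mono (hEmeasle s hlt)
      · -- c < s : W s = U s
        have hW2 : W s = U s := by
          ext y
          constructor
          · intro hy
            obtain ⟨i, hi⟩ := Set.mem_iUnion.mp hy
            exact Set.mem_iUnion.mpr ⟨i, hi.1, hi.2.2⟩
          · intro hy
            obtain ⟨i, hi⟩ := Set.mem_iUnion.mp hy
            refine Set.mem_iUnion.mpr ⟨i, hi.1, ?_, hi.2⟩
            linarith [hi.2]
        rw [hW2, ← hvolS s, min_eq_right (K1 s hgt)]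
    have hQanti : ∀ i, Antitone fun s => volume (Q i s) := by
      intro i s s' hss'
      refine measure_mono fun y hy => ⟨hy.1, hy.2.1, lt_of_le_of_lt hss' hy.2.2⟩
    have hfinal : (∑ i : Fin m, L' i) = I := by
      calc (∑ i : Fin m, L' i) = ∑ i : Fin m, ∫⁻ s in Set.Ioi (0:ℝ), volume (Q i s) :=
          Finset.sum_congr rfl fun i _ => hL'eq i
      _ = ∫⁻ s in Set.Ioi (0:ℝ), ∑ i : Fin m, volume (Q i s) :=
          (lintegral_finset_sum' _ fun i _ => ((hQanti i).measurable).aemeasurable).symm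
      _ = ∫⁻ s in Set.Ioi (0:ℝ), volume (W s) := lintegral_congr fun s => hsumW s
      _ = I := by
          refine lintegral_congr_ae ?_
          have h0 : ∀ᵐ s ∂volume.restrict (Set.Ioi (0:ℝ)), s ≠ c := by
            refine ae_restrict_of_ae ?_
            rw [ae_iff]
            have : {s : ℝ | ¬ s ≠ c} = {c} := by ext s; simp
            rw [this]
            exact measure_singleton c
          filter_upwards [ae_restrict_mem measurableSet_Ioi, h0] with s hs hsc
          exact hae s hs hsc
    calc (∑ i : Fin m, ∫ t in Set.Icc (0:ℝ) T,
          (Set.indicator {t | c ≤ f i t} (fun _ => (1:ℝ)) t)^2 * f i t)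
        = ∑ i : Fin m, (L' i).toReal := Finset.sum_congr rfl fun i _ => hconv' i
    _ = (∑ i : Fin m, L' i).toReal := (ENNReal.toReal_sum fun i _ => hL'fin i).symm
    _ = I.toReal := by rw [hfinal]
    _ = ∫ x in Set.Icc (0:ℝ) α, rearr a F x := hRconv.symm
end
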